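/- arXiv:1906.00505 — 6 statements merged into one kernel-verified Lean document; each statement's English description precedes it below -/
import Mathlib

section
/- Let Y = (Y_1, Y_2) with Y_i = θ_i + Z_i where the law of (Z_1, Z_2) is invariant under (z_1, z_2) ↦ (-z_2, -z_1), and suppose P(|Z_1| ≤ c) ≥ 1 - α. Let ⟨1⟩ denote the index of the larger of Y_1, Y_2 (ties broken toward index 1). Then P(θ_⟨1⟩ ∈ [Y_⟨1⟩ - c, Y_⟨1⟩ + c]) ≥ 1 - α; i.e., the standard unadjusted interval around the larger observation covers the corresponding selected parameter with probability at least 1 - α. -/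
open MeasureTheory

theorem stmt3 {Ω : Type*} [MeasurableSpace Ω] (ℙ : Measure Ω) [IsProbabilityMeasure ℙ]
    (Z : Ω → ℝ × ℝ) (hZ : Measurable Z) (θ : ℝ × ℝ) (c α : ℝ) (hc : 0 < c)
    (hsym : Measure.map (fun z : ℝ × ℝ => (-z.2, -z.1)) (Measure.map Z ℙ) = Measure.map Z ℙ)
    (hcov : ℙ {ω | |(Z ω).1| ≤ c} ≥ ENNReal.ofReal (1 - α)) :
    ℙ {ω | (if θ.2 + (Z ω).2 ≤ θ.1 + (Z ω).1 then θ.1 else θ.2) ∈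
        Set.Icc (max (θ.1 + (Z ω).1) (θ.2 + (Z ω).2) - c)
                (max (θ.1 + (Z ω).1) (θ.2 + (Z ω).2) + c)}
      ≥ ENNReal.ofReal (1 - α) := by
  set g : ℝ × ℝ → ℝ × ℝ := fun z => (-z.2, -z.1) with hg
  have hgm : Measurable g := by fun_prop
  set S1 : Set (ℝ × ℝ) := {z | θ.2 + z.2 ≤ θ.1 + z.1 ∧ |z.1| ≤ c} with hS1def
  set S2 : Set (ℝ × ℝ) := {z | ¬ (θ.2 + z.2 ≤ θ.1 + z.1) ∧ |z.2| ≤ c} with hS2def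
  set S2' : Set (ℝ × ℝ) := {z | ¬ (θ.2 + z.2 ≤ θ.1 + z.1) ∧ |z.1| ≤ c} with hS2'def
  have hA : MeasurableSet {z : ℝ × ℝ | θ.2 + z.2 ≤ θ.1 + z.1} :=
    measurableSet_le (measurable_const.add measurable_snd) (measurable_const.add measurable_fst)
  have hB1 : MeasurableSet {z : ℝ × ℝ | |z.1| ≤ c} :=
    measurableSet_le measurable_fst.abs measurable_const
  have hB2 : MeasurableSet {z : ℝ × ℝ | |z.2| ≤ c} :=
    measurableSet_le measurable_snd.abs measurable_const
  have hS1 : MeasurableSet S1 := hA.inter hB1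
  have hS2 : MeasurableSet S2 := hA.compl.inter hB2
  have hS2' : MeasurableSet S2' := hA.compl.inter hB1
  have hev : {ω | (if θ.2 + (Z ω).2 ≤ θ.1 + (Z ω).1 then θ.1 else θ.2) ∈
        Set.Icc (max (θ.1 + (Z ω).1) (θ.2 + (Z ω).2) - c)
                (max (θ.1 + (Z ω).1) (θ.2 + (Z ω).2) + c)} = Z ⁻¹' (S1 ∪ S2) := by
    ext ω
    simp only [Set.mem_setOf_eq, Set.mem_preimage, Set.mem_union, hS1def, hS2def, Set.mem_Icc]
    by_cases h : θ.2 + (Z ω).2 ≤ θ.1 + (Z ω).1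
    · simp only [h, if_true, max_eq_left h, true_and, not_true, false_and, or_false, abs_le]
      constructor
      · rintro ⟨h1, h2⟩; constructor <;> linarith
      · rintro ⟨h1, h2⟩; constructor <;> linarith
    · have hmax : max (θ.1 + (Z ω).1) (θ.2 + (Z ω).2) = θ.2 + (Z ω).2 :=
        max_eq_right (le_of_lt (lt_of_not_ge h))
      simp only [h, if_false, hmax, not_false_iff, true_and, false_and, false_or, abs_le]
      constructor
      · rintro ⟨h1, h2⟩; constructor <;> linarith
      · rintro ⟨h1, h2⟩; constructor <;> linarith
  rw [hev, ← Measure.map_apply hZ (hS1.union hS2)]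
  have hdisj : Disjoint S1 S2 := by
    rw [Set.disjoint_left]; rintro z ⟨h1, _⟩ ⟨h2, _⟩; exact h2 h1
  rw [measure_union hdisj hS2]
  have h2 : Measure.map Z ℙ S2 = Measure.map Z ℙ S2' := by
    conv_lhs => rw [← hsym]
    rw [Measure.map_apply hgm hS2]
    congr 1
    ext z
    simp only [Set.mem_preimage, hS2def, hS2'def, Set.mem_setOf_eq, hg, abs_neg, not_le]
    constructor
    · rintro ⟨h1, h2⟩; exact ⟨by linarith, h2⟩
    · rintro ⟨h1, h2⟩; exact ⟨by linarith, h2⟩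
  rw [h2, ← measure_union (by rw [Set.disjoint_left]; rintro z ⟨h1, _⟩ ⟨h2, _⟩; exact h2 h1) hS2']
  have hun : S1 ∪ S2' = {z : ℝ × ℝ | |z.1| ≤ c} := by
    ext z
    simp only [Set.mem_union, hS1def, hS2'def, Set.mem_setOf_eq]
    by_cases h : θ.2 + z.2 ≤ θ.1 + z.1 <;> simp [h]
  rw [hun, Measure.map_apply hZ (measurableSet_le (by fun_prop) measurable_const)]
  exact hcov
end

section
/- Let Y_1, ..., Y_m be independent real random variables with Y_i = θ_i + Z_i. Fix k ≤ m and constants c̲_i, c̄_i > 0 with P(Z_i > c̲_i) ≤ λ̲ and P(Z_i < -c̄_i) ≤ λ̄ for all i. Let S(Y) be the set of indices of the k largest values among Y_1, ..., Y_m (ties broken lexicographically). Then the probability that there exists i ∈ S(Y) with θ_i ∉ [Y_i - c̲_i, Y_i + c̄_i] is at most m·λ̲ + k·λ̄. -/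
open MeasureTheory ProbabilityTheory Finset
open scoped ENNReal

/-! Writing `Y i = θ i + Z i`, the event splits into `cl i < Z i` for some `i`, which the union
bound controls by `m λ̲`, and `Z i < -cu i` for some selected `i`. For the latter, rank the indices
by `Y`, breaking ties in favour of indices with `Z i < -cu i` and then by index. The highest-ranked
such index has fewer than `k` indices above it, all of them selected, so it suffices to bound
`∑ i, P (i is in the top `k` ∧ Z i < -cu i)`. For fixed other coordinates, being in the top `k` is
monotone in `Z i`; comparing with the same event at the threshold `Z i = -cu i`, which is
independent of `Z i`, gives `P (top k ∧ Z i < -cu i) ≤ λ̄ P (top k)`, and the probabilities of the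
top-`k` events add up to `k`. -/

theorem Finset.card_filter_card_lt_le {ι L : Type*} [Fintype ι] [LinearOrder L] {f : ι → L}
    (hf : Function.Injective f) (k : ℕ) :
    #{i | #{j | f i < f j} < k} ≤ k := by
  classical
  set T : Finset ι := {i | #{j | f i < f j} < k}
  by_contra! hT
  obtain ⟨i, hiT, hmin⟩ := T.exists_min_image f (card_pos.1 (by omega))
  have hsub : T.erase i ⊆ ({j | f i < f j} : Finset ι) := fun j hj => by
    obtain ⟨hji, hjT⟩ := mem_erase.1 hj
    simpa using (hmin j hjT).lt_of_ne (hf.ne hji.symm)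
  have hcard := card_le_card hsub
  rw [card_erase_of_mem hiT] at hcard
  have hi := (mem_filter.1 hiT).2
  omega

section TieKey

variable {ι : Type*} (θ c : ι → ℝ)

noncomputable def tieKey (j : ι) (z : ℝ) : ℝ ×ₗ Bool ×ₗ ι :=
  toLex (θ j + z, toLex (decide (z < -c j), j))

variable {θ c}

theorem tieKey_injective (z : ι → ℝ) : Function.Injective fun j => tieKey θ c j (z j) :=
  fun j j' h => by simpa [tieKey] using congrArg (fun x => (ofLex (ofLex x).2).2) h

variable [LinearOrder ι]

theorem add_le_add_of_tieKey_le {j j' : ι} {z z' : ℝ} (h : tieKey θ c j z ≤ tieKey θ c j' z') :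
    θ j + z ≤ θ j' + z' :=
  Prod.Lex.monotone_fst _ _ h

theorem add_lt_add_of_tieKey_lt {j j' : ι} {z z' : ℝ} (h : tieKey θ c j z < tieKey θ c j' z')
    (hz : z < -c j) (hz' : ¬ z' < -c j') : θ j + z < θ j' + z' := by
  rcases Prod.Lex.toLex_lt_toLex.1 h with h | ⟨-, h⟩
  · exact h
  · simp [hz, hz', Prod.Lex.toLex_lt_toLex] at h
    exact absurd h (by decide)

theorem tieKey_strictMono (j : ι) : StrictMono (tieKey θ c j) := fun z z' h =>
  Prod.Lex.toLex_lt_toLex.2 (.inl (by simpa using h))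

theorem measurableSet_lt_tieKey (a : ℝ ×ₗ Bool ×ₗ ι) (j : ι) :
    MeasurableSet {z | a < tieKey θ c j z} :=
  Set.OrdConnected.measurableSet <| IsUpperSet.ordConnected fun _ _ hzz' hz =>
    hz.trans_le ((tieKey_strictMono j).monotone hzz')

theorem measurableSet_tieKey_lt_tieKey {Ω : Type*} [MeasurableSpace Ω] {X X' : Ω → ℝ}
    (hX : Measurable X) (hX' : Measurable X') (i j : ι) :
    MeasurableSet {ω | tieKey θ c i (X ω) < tieKey θ c j (X' ω)} := by
  have hdecide {Y : Ω → ℝ} (hY : Measurable Y) (a : ℝ) : Measurable fun ω => decide (Y ω < a) :=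
    measurable_to_countable' fun b => by
      have hlt : MeasurableSet {ω | Y ω < a} := measurableSet_lt hY measurable_const
      cases b
      · convert hlt.compl using 1; ext; simp
      · convert hlt using 1; ext; simp
  have hb : Measurable fun ω => (decide (X ω < -c i), decide (X' ω < -c j)) :=
    (hdecide hX _).prodMk (hdecide hX' _)
  have hset : {ω | tieKey θ c i (X ω) < tieKey θ c j (X' ω)} =
      {ω | θ i + X ω < θ j + X' ω} ∪ ({ω | θ i + X ω = θ j + X' ω} ∩
        (fun ω => (decide (X ω < -c i), decide (X' ω < -c j))) ⁻¹'
          {p | toLex (p.1, i) < toLex (p.2, j)}) := by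
    ext ω
    simp [tieKey, Prod.Lex.toLex_lt_toLex]
  rw [hset]
  exact (measurableSet_lt (by fun_prop) (by fun_prop)).union
    ((measurableSet_eq_fun (by fun_prop) (by fun_prop)).inter (hb (.of_discrete)))

theorem exists_card_tieKey_lt_lt_of_mem [Fintype ι] {z : ι → ℝ} {T : Finset ι} {k : ℕ}
    (hT : #T = k) (hsel : ∀ i ∈ T, ∀ j ∉ T, θ j + z j ≤ θ i + z i) {i : ι} (hiT : i ∈ T)
    (hi : z i < -c i) :
    ∃ i', z i' < -c i' ∧ #{j | tieKey θ c i' (z i') < tieKey θ c j (z j)} < k := by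
  classical
  obtain ⟨i', hi', hmax⟩ := ({j | z j < -c j} : Finset ι).exists_max_image
    (fun j => tieKey θ c j (z j)) ⟨i, by simpa using hi⟩
  rw [mem_filter] at hi'
  refine ⟨i', hi'.2, ?_⟩
  have hsub : ({j | tieKey θ c i' (z i') < tieKey θ c j (z j)} : Finset ι) ⊆ T.erase i := by
    intro j hj
    rw [mem_filter] at hj
    have hj_good : ¬ z j < -c j := fun hj_bad =>
      (hj.2.trans_le (hmax j (by simpa using hj_bad))).false
    have hlt : θ i + z i < θ j + z j :=
      (add_le_add_of_tieKey_le (hmax i (by simpa using hi))).trans_lt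
        (add_lt_add_of_tieKey_lt hj.2 hi'.2 hj_good)
    have hjT : j ∈ T := by
      by_contra hjT
      exact (hsel i hiT j hjT).not_gt hlt
    exact mem_erase.2 ⟨by rintro rfl; exact hlt.false, hjT⟩
  calc _ ≤ #(T.erase i) := card_le_card hsub
    _ < k := by
      rw [card_erase_of_mem hiT, ← hT]
      exact Nat.sub_lt (card_pos.2 ⟨i, hiT⟩) one_pos

end TieKey

theorem measurableSet_card_filter_lt {Ω ι : Type*} {mΩ : MeasurableSpace Ω} (s : Finset ι)
    {p : ι → Ω → Prop} [∀ j ω, Decidable (p j ω)] (hp : ∀ j ∈ s, MeasurableSet {ω | p j ω})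
    (k : ℕ) : MeasurableSet {ω | #{j ∈ s | p j ω} < k} := by
  have hcard : Measurable fun ω => #{j ∈ s | p j ω} := by
    simp_rw [card_filter]
    exact Finset.measurable_sum _ fun j hj => Measurable.ite (hp j hj) measurable_const
      measurable_const
  exact hcard measurableSet_Iio

open Classical in
theorem sum_measure_le_of_card_le {Ω ι : Type*} [MeasurableSpace Ω] (μ : Measure Ω)
    (s : Finset ι) {E : ι → Set Ω}
    (hE : ∀ i ∈ s, MeasurableSet (E i)) {k : ℕ} (h : ∀ ω, #{i ∈ s | ω ∈ E i} ≤ k) :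
    ∑ i ∈ s, μ (E i) ≤ k * μ Set.univ := by
  calc ∑ i ∈ s, μ (E i) = ∑ i ∈ s, ∫⁻ ω, (E i).indicator 1 ω ∂μ :=
        sum_congr rfl fun i hi => (lintegral_indicator_one (hE i hi)).symm
    _ = ∫⁻ ω, ∑ i ∈ s, (E i).indicator 1 ω ∂μ :=
        (lintegral_finsetSum _ fun i hi => measurable_one.indicator (hE i hi)).symm
    _ ≤ ∫⁻ _, (k : ℝ≥0∞) ∂μ := lintegral_mono fun ω => by
        simpa [Set.indicator_apply, sum_boole] using h ω
    _ = k * μ Set.univ := lintegral_const _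

theorem measure_inter_le_mul_of_indepSet {Ω : Type*} [MeasurableSpace Ω] {P : Measure Ω}
    [IsProbabilityMeasure P] {A E F : Set Ω} (hA : MeasurableSet A) (hAF : IndepSet A F P)
    (hEAF : E ∩ A ⊆ F) (hFAE : F \ A ⊆ E) {L : ℝ≥0∞} (hAL : P A ≤ L) (hL : L ≤ 1) :
    P (E ∩ A) ≤ L * P E := by
  have hEA : P (E ∩ A) ≤ P A * P F := by
    rw [← hAF.measure_inter_eq_mul, Set.inter_comm A]
    exact measure_mono (Set.subset_inter hEAF Set.inter_subset_right)
  have hFA : P (F \ A) = (1 - P A) * P F := by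
    rw [ENNReal.sub_mul fun _ _ => measure_ne_top P F, one_mul, ← hAF.measure_inter_eq_mul,
      Set.inter_comm, ← measure_inter_add_sdiff F hA, ENNReal.add_sub_cancel_left (measure_ne_top _ _)]
  have hE : (1 - P A) * P F + P (E ∩ A) ≤ P E := by
    rw [← hFA, ← measure_sdiff_add_inter E hA]
    exact add_le_add_left (measure_mono fun ω hω => Set.mem_sdiff_of_mem (hFAE hω) hω.2) _
  have hmix : (1 - L) * P A ≤ L * (1 - P A) := by
    rw [mul_comm]
    exact mul_le_mul' hAL (tsub_le_tsub_left hAL 1)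
  calc P (E ∩ A) = (1 - L) * P (E ∩ A) + L * P (E ∩ A) := by
        rw [← add_mul, tsub_add_cancel_of_le hL, one_mul]
    _ ≤ (1 - L) * (P A * P F) + L * P (E ∩ A) := by gcongr
    _ ≤ L * ((1 - P A) * P F) + L * P (E ∩ A) := by
        rw [← mul_assoc, ← mul_assoc]
        gcongr
    _ = L * ((1 - P A) * P F + P (E ∩ A)) := by ring
    _ ≤ L * P E := by gcongr

section TopK

variable {Ω ι : Type*} [MeasurableSpace Ω] [Fintype ι] [LinearOrder ι]
  (θ c : ι → ℝ) (Z : ι → Ω → ℝ) (k : ℕ)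

def topKEvent (i : ι) : Set Ω :=
  {ω | #{j | tieKey θ c i (Z i ω) < tieKey θ c j (Z j ω)} < k}

variable {θ c Z}

theorem measurableSet_topKEvent (hZ : ∀ i, Measurable (Z i)) (i : ι) :
    MeasurableSet (topKEvent θ c Z k i) :=
  measurableSet_card_filter_lt _ (fun j _ => measurableSet_tieKey_lt_tieKey (hZ i) (hZ j) i j) k

theorem sum_measure_topKEvent_le (P : Measure Ω) [IsProbabilityMeasure P]
    (hZ : ∀ i, Measurable (Z i)) : ∑ i, P (topKEvent θ c Z k i) ≤ k := by
  refine (sum_measure_le_of_card_le P univ (k := k) (fun i _ => measurableSet_topKEvent k hZ i)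
    fun ω => ?_).trans_eq (by simp)
  convert card_filter_card_lt_le (tieKey_injective (θ := θ) (c := c) fun j => Z j ω) k
  exact Iff.rfl

theorem measure_topKEvent_inter_le {P : Measure Ω} [IsProbabilityMeasure P]
    (hZ : ∀ i, Measurable (Z i)) (hindep : iIndepFun Z P) (i : ι) {L : ℝ≥0∞}
    (hAL : P {ω | Z i ω < -c i} ≤ L) (hL : L ≤ 1) :
    P (topKEvent θ c Z k i ∩ {ω | Z i ω < -c i}) ≤ L * P (topKEvent θ c Z k i) := by
  -- `topKEvent` with `Z i` frozen at the threshold; it only depends on the other coordinates.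
  set F : Set Ω := {ω | #{j ∈ {i}ᶜ | tieKey θ c i (-c i) < tieKey θ c j (Z j ω)} < k}
  have hindAF : IndepSet {ω | Z i ω < -c i} F P := by
    refine (indep_iSup_of_disjoint (fun j => (hZ j).comap_le) hindep.iIndep
      (disjoint_compl_right (a := ({i} : Set ι)))).indepSet_of_measurableSet ?_ ?_
    · exact le_iSup₂ (f := fun j (_ : j ∈ ({i} : Set ι)) => MeasurableSpace.comap (Z j) _) i rfl _
        ⟨Set.Iio (-c i), measurableSet_Iio, rfl⟩
    · refine measurableSet_card_filter_lt _ (fun j hj => ?_) k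
      exact le_iSup₂ (f := fun j (_ : j ∈ ({i}ᶜ : Set ι)) => MeasurableSpace.comap (Z j) _) j
        (by simpa using hj) _ ⟨_, measurableSet_lt_tieKey _ j, rfl⟩
  refine measure_inter_le_mul_of_indepSet (measurableSet_lt (hZ i) measurable_const) hindAF
    ?_ ?_ hAL hL
  · rintro ω ⟨hω, hA⟩
    refine (card_le_card fun j hj => ?_).trans_lt hω
    rw [mem_filter] at hj ⊢
    exact ⟨mem_univ j, ((tieKey_strictMono i) hA).trans hj.2⟩
  · rintro ω ⟨hω, hA⟩
    refine (card_le_card fun j hj => ?_).trans_lt hω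
    rw [mem_filter] at hj ⊢
    refine ⟨mem_compl.2 fun hji => ?_,
      ((tieKey_strictMono i).monotone (not_lt.1 hA)).trans_lt hj.2⟩
    obtain rfl := mem_singleton.1 hji
    exact hj.2.false

end TopK

theorem stmt4_general {Ω : Type*} [MeasurableSpace Ω] (P : Measure Ω) [IsProbabilityMeasure P]
    (m k : ℕ)
    (Z : Fin m → Ω → ℝ) (hZmeas : ∀ i, Measurable (Z i))
    (hindep : iIndepFun Z P)
    (θ : Fin m → ℝ) (cl cu : Fin m → ℝ)
    (lamL lamU : ℝ) (hlamL : lamL ∈ Set.Ioo (0:ℝ) 1) (hlamU : lamU ∈ Set.Ioo (0:ℝ) 1)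
    (htailL : ∀ i, P {ω | cl i < Z i ω} ≤ ENNReal.ofReal lamL)
    (htailU : ∀ i, P {ω | Z i ω < -cu i} ≤ ENNReal.ofReal lamU)
    (S : Ω → Finset (Fin m))
    (hScard : ∀ ω, (S ω).card = k)
    (hSsel : ∀ ω, ∀ i ∈ S ω, ∀ j ∉ S ω, θ j + Z j ω ≤ θ i + Z i ω) :
    P {ω | ∃ i ∈ S ω, θ i ∉ Set.Icc (θ i + Z i ω - cl i) (θ i + Z i ω + cu i)}
      ≤ ENNReal.ofReal (m * lamL + k * lamU) := by
  have hcover : {ω | ∃ i ∈ S ω, θ i ∉ Set.Icc (θ i + Z i ω - cl i) (θ i + Z i ω + cu i)} ⊆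
      (⋃ i, {ω | cl i < Z i ω}) ∪ ⋃ i, topKEvent θ cu Z k i ∩ {ω | Z i ω < -cu i} := by
    rintro ω ⟨i, hiS, hi⟩
    rcases not_and_or.1 hi with hi | hi
    · exact Or.inl (Set.mem_iUnion.2 ⟨i, show cl i < Z i ω by linarith [not_le.1 hi]⟩)
    · obtain ⟨i', hi'⟩ :=
        exists_card_tieKey_lt_lt_of_mem (hScard ω) (hSsel ω) hiS (by linarith [not_le.1 hi])
      exact Or.inr (Set.mem_iUnion.2 ⟨i', hi'.2, hi'.1⟩)
  have hlamU_le : ENNReal.ofReal lamU ≤ 1 := ENNReal.ofReal_le_one.2 hlamU.2.le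
  calc _ ≤ P (⋃ i, {ω | cl i < Z i ω}) + P (⋃ i, topKEvent θ cu Z k i ∩ {ω | Z i ω < -cu i}) :=
        (measure_mono hcover).trans (measure_union_le _ _)
    _ ≤ ∑ i, ENNReal.ofReal lamL + ∑ i, ENNReal.ofReal lamU * P (topKEvent θ cu Z k i) := by
        gcongr
        · exact (measure_iUnion_fintype_le _ _).trans (sum_le_sum fun i _ => htailL i)
        · exact (measure_iUnion_fintype_le _ _).trans (sum_le_sum fun i _ =>
            measure_topKEvent_inter_le k hZmeas hindep i (htailU i) hlamU_le)
    _ ≤ m * ENNReal.ofReal lamL + ENNReal.ofReal lamU * k := by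
        rw [sum_const, card_univ, Fintype.card_fin, nsmul_eq_mul, ← mul_sum]
        gcongr
        exact sum_measure_topKEvent_le k P hZmeas
    _ = ENNReal.ofReal (m * lamL + k * lamU) := by
        rw [ENNReal.ofReal_add (by positivity [hlamL.1]) (by positivity [hlamU.1]),
          ENNReal.ofReal_mul (by positivity), ENNReal.ofReal_mul (by positivity),
          ENNReal.ofReal_natCast, ENNReal.ofReal_natCast, mul_comm (k : ℝ≥0∞)]

theorem stmt4 {Ω : Type*} [MeasurableSpace Ω] (P : Measure Ω) [IsProbabilityMeasure P]
    (m k : ℕ) (hk : 1 ≤ k) (hkm : k ≤ m)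
    (Z : Fin m → Ω → ℝ) (hZmeas : ∀ i, Measurable (Z i))
    (hindep : iIndepFun Z P)
    (θ : Fin m → ℝ) (cl cu : Fin m → ℝ) (hcl : ∀ i, 0 < cl i) (hcu : ∀ i, 0 < cu i)
    (lamL lamU : ℝ) (hlamL : lamL ∈ Set.Ioo (0:ℝ) 1) (hlamU : lamU ∈ Set.Ioo (0:ℝ) 1)
    (htailL : ∀ i, P {ω | cl i < Z i ω} ≤ ENNReal.ofReal lamL)
    (htailU : ∀ i, P {ω | Z i ω < -cu i} ≤ ENNReal.ofReal lamU)
    (S : Ω → Finset (Fin m))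
    (hScard : ∀ ω, (S ω).card = k)
    (hSsel : ∀ ω, ∀ i ∈ S ω, ∀ j ∉ S ω, θ j + Z j ω ≤ θ i + Z i ω) :
    P {ω | ∃ i ∈ S ω, θ i ∉ Set.Icc (θ i + Z i ω - cl i) (θ i + Z i ω + cu i)}
      ≤ ENNReal.ofReal (m * lamL + k * lamU) :=
  stmt4_general P m k Z hZmeas hindep θ cl cu lamL lamU hlamL hlamU htailL htailU S hScard hSsel
end

section
/- Let Y_1, ..., Y_m be independent with Y_i = θ_i + Z_i, all Z_i having common continuous CDF F. For δ ∈ (0,1) and α ∈ (0,1), set c̲ = F^{-1}(1 - δα/m) and c̄ = -F^{-1}((1-δ)α/k). Then the intervals [Y_i - c̲, Y_i + c̄] for i in the set of indices of the k largest Y's simultaneously cover the corresponding θ_i with probability at least 1 - α. -/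
/-!
Coverage fails only if some `Z i > c̲`, or some selected `i` has `Z i < -c̄`. By the union bound
the first has probability at most `m · δα/m`. An index `i` is selected only on the event `C i`
that fewer than `k` of the `Y j` exceed `Y i`. Given the other coordinates, `C i` is an upper set
in `Z i`, so by independence and Harris' inequality on the line it is negatively correlated with
`{Z i < -c̄}`: `P (C i ∩ {Z i < -c̄}) ≤ F (-c̄) · P (C i)`. Since `F` is continuous the `Y i` are
almost surely distinct, so at most `k` of the events `C i` occur and `∑ P (C i) ≤ k`; the second
failure therefore has probability at most `k · (1 - δ)α/k`.
-/

open MeasureTheory ProbabilityTheory Finset Function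
open scoped ENNReal

section numAbove

variable {ι α : Type*} [Fintype ι] [LinearOrder α]

def numAbove (x : ι → α) (i : ι) : ℕ := #{j | x i < x j}

lemma numAbove_le_of_apply_le {x y : ι → α} {i : ι} (hi : x i ≤ y i)
    (hne : ∀ j ≠ i, y j ≤ x j) : numAbove y i ≤ numAbove x i := by
  refine card_le_card fun j hj => ?_
  simp only [mem_filter, mem_univ, true_and] at hj ⊢
  have hji : j ≠ i := by rintro rfl; exact lt_irrefl _ hj
  exact hi.trans_lt (hj.trans_le (hne j hji))

lemma numAbove_lt_card_of_mem {x : ι → α} {S : Finset ι} (hS : ∀ i ∈ S, ∀ j ∉ S, x j ≤ x i)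
    {i : ι} (hi : i ∈ S) : numAbove x i < #S := by
  classical
  have hsub : ({j | x i < x j} : Finset ι) ⊆ S.erase i := by
    intro j hj
    simp only [mem_filter, mem_univ, true_and] at hj
    refine mem_erase.2 ⟨by rintro rfl; exact lt_irrefl _ hj, ?_⟩
    by_contra hjS
    exact (hS i hi j hjS).not_gt hj
  exact (card_le_card hsub).trans_lt (card_erase_lt_of_mem hi)

lemma numAbove_lt_numAbove_of_lt {x : ι → α} {a b : ι} (hab : x a < x b) :
    numAbove x b < numAbove x a := by
  refine card_lt_card ⟨fun j hj => ?_, fun hsub => ?_⟩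
  · simp only [mem_filter, mem_univ, true_and] at hj ⊢
    exact hab.trans hj
  · simpa using hsub (by simpa using hab : b ∈ ({j | x a < x j} : Finset ι))

lemma numAbove_injective {x : ι → α} (hx : Injective x) : Injective (numAbove x) := by
  intro a b hab
  rcases lt_trichotomy (x a) (x b) with h | h | h
  · exact absurd hab (numAbove_lt_numAbove_of_lt h).ne'
  · exact hx h
  · exact absurd hab (numAbove_lt_numAbove_of_lt h).ne

lemma card_le_of_forall_numAbove_lt {x : ι → α} (hx : Injective x) {s : Finset ι} {k : ℕ}
    (hs : ∀ i ∈ s, numAbove x i < k) : #s ≤ k := by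
  simpa using card_le_card_of_injOn (t := range k) (numAbove x)
    (fun i hi => by simpa using hs i hi) (numAbove_injective hx).injOn

lemma measurable_numAbove (i : ι) : Measurable fun x : ι → ℝ => numAbove x i := by
  simp_rw [numAbove, card_filter]
  exact Finset.measurable_sum _ fun j _ => Measurable.ite
    (measurableSet_lt (measurable_pi_apply i) (measurable_pi_apply j)) measurable_const
    measurable_const

end numAbove

lemma ENNReal.ofReal_div_natCast_mul_le {a : ℝ} (ha : 0 ≤ a) (n : ℕ) :
    ENNReal.ofReal (a / n) * n ≤ ENNReal.ofReal a := by
  rw [← ENNReal.ofReal_natCast, ← ENNReal.ofReal_mul (by positivity)]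
  refine ENNReal.ofReal_le_ofReal ?_
  rcases eq_or_ne (n : ℝ) 0 with hn | hn
  · simpa [hn] using ha
  · rw [div_mul_cancel₀ _ hn]

open Set

lemma nullSingletonClass_of_continuous_cdf (μ : Measure ℝ) [IsProbabilityMeasure μ]
    (h : Continuous (cdf μ)) : NullSingletonClass μ where
  measure_singleton x := by
    rw [← measure_cdf μ, StieltjesFunction.measure_singleton, h.continuousWithinAt.leftLim_eq,
      sub_self, ENNReal.ofReal_zero]

section

variable {Ω : Type*} [MeasurableSpace Ω] {P : Measure Ω}

lemma sum_measure_le_of_ae_card_le {ι : Type*} [Fintype ι] {C : ι → Set Ω}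
    (hC : ∀ i, MeasurableSet (C i)) {k : ℕ}
    (h : ∀ᵐ ω ∂P, ∀ s : Finset ι, (∀ i ∈ s, ω ∈ C i) → #s ≤ k) :
    ∑ i, P (C i) ≤ k * P univ := by
  classical
  calc ∑ i, P (C i) = ∫⁻ ω, ∑ i, (C i).indicator 1 ω ∂P := by
        rw [lintegral_finsetSum _ fun i _ => measurable_one.indicator (hC i)]
        simp_rw [lintegral_indicator_one (hC _)]
    _ = ∫⁻ ω, (#{i | ω ∈ C i} : ℝ≥0∞) ∂P := by
        congr 1; funext ω
        simp [Set.indicator_apply, sum_boole]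
    _ ≤ ∫⁻ _, (k : ℝ≥0∞) ∂P :=
        lintegral_mono_ae (h.mono fun ω hω => by exact_mod_cast hω _ fun i => by simp)
    _ = k * P univ := lintegral_const _

section Harris

variable {α : Type*} [LinearOrder α] [TopologicalSpace α] [OrderClosedTopology α]
  [MeasurableSpace α] [OpensMeasurableSpace α]

lemma IsUpperSet.measure_inter_Iio_le {μ : Measure α} [IsProbabilityMeasure μ] {U : Set α}
    (hU : IsUpperSet U) (c : α) : μ (U ∩ Iio c) ≤ μ (Iio c) * μ U := by
  rcases (U ∩ Iio c).eq_empty_or_nonempty with h | ⟨u, huU, huc⟩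
  · simp [h]
  have hcU : Ici c ⊆ U := fun x hx => hU ((le_of_lt huc).trans hx) huU
  have hsplit : μ U = μ (U ∩ Iio c) + (1 - μ (Iio c)) := by
    rw [← prob_compl_eq_one_sub measurableSet_Iio, compl_Iio, ← inter_eq_right.2 hcU,
      ← compl_Iio, ← sdiff_eq, measure_inter_add_sdiff _ measurableSet_Iio]
  set a := μ (U ∩ Iio c)
  set p := μ (Iio c)
  have hap : a ≤ p := measure_mono inter_subset_right
  calc a = a * p + a * (1 - p) := by rw [← mul_add, add_tsub_cancel_of_le prob_le_one, mul_one]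
    _ ≤ p * a + p * (1 - p) := by rw [mul_comm a p]; gcongr
    _ = p * μ U := by rw [hsplit, mul_add]

lemma ProbabilityTheory.IndepFun.measure_inter_lt_le {β : Type*} [MeasurableSpace β]
    [IsProbabilityMeasure P] {W : Ω → β} {X : Ω → α} (hW : Measurable W) (hX : Measurable X)
    (hind : IndepFun W X P)
    {E : Set (β × α)} (hE : MeasurableSet E) (hEup : ∀ w, IsUpperSet (Prod.mk w ⁻¹' E)) (c : α) :
    P ({ω | (W ω, X ω) ∈ E} ∩ {ω | X ω < c}) ≤ P {ω | X ω < c} * P {ω | (W ω, X ω) ∈ E} := by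
  have hmap := (indepFun_iff_map_prod_eq_prod_map_map hW.aemeasurable hX.aemeasurable).1 hind
  have hpair : Measurable fun ω => (W ω, X ω) := hW.prodMk hX
  have hEc : MeasurableSet (E ∩ Prod.snd ⁻¹' Iio c) := hE.inter (measurable_snd measurableSet_Iio)
  have : IsProbabilityMeasure (P.map X) := Measure.isProbabilityMeasure_map hX.aemeasurable
  have : IsProbabilityMeasure (P.map W) := Measure.isProbabilityMeasure_map hW.aemeasurable
  have key : ((P.map W).prod (P.map X)) (E ∩ Prod.snd ⁻¹' Iio c)
      ≤ (P.map X) (Iio c) * ((P.map W).prod (P.map X)) E := by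
    rw [Measure.prod_apply hEc, Measure.prod_apply hE,
      ← lintegral_const_mul _ (measurable_measure_prodMk_left hE)]
    exact lintegral_mono fun w => (hEup w).measure_inter_Iio_le c
  rwa [← hmap, Measure.map_apply hpair hEc, Measure.map_apply hpair hE,
    Measure.map_apply hX measurableSet_Iio] at key

lemma ProbabilityTheory.iIndepFun.measure_inter_lt_le {ι : Type*} [Fintype ι] [DecidableEq ι]
    [IsProbabilityMeasure P] {Z : ι → Ω → α} (hZ : ∀ i, Measurable (Z i)) (hind : iIndepFun Z P)
    (i : ι) {E : Set (ι → α)} (hE : MeasurableSet E)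
    (hEmono : ∀ x y, x i ≤ y i → (∀ j ≠ i, x j = y j) → x ∈ E → y ∈ E) (c : α) :
    P ({ω | (fun j => Z j ω) ∈ E} ∩ {ω | Z i ω < c})
      ≤ P {ω | Z i ω < c} * P {ω | (fun j => Z j ω) ∈ E} := by
  set T := univ.erase i
  have hind' : IndepFun (fun ω (j : T) => Z j ω) (Z i) P := by
    exact (hind.indepFun_finset T {i} (by simp [T]) hZ).comp measurable_id
      (measurable_pi_apply ⟨i, mem_singleton_self i⟩)
  let g : (T → α) × α → (ι → α) := fun p j => if h : j ∈ T then p.1 ⟨j, h⟩ else p.2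
  have hg : Measurable g := by
    refine measurable_pi_lambda _ fun j => ?_
    by_cases h : j ∈ T
    · simp only [g, dif_pos h]
      exact (measurable_pi_apply _).comp measurable_fst
    · simp only [g, dif_neg h]
      exact measurable_snd
  have hgZ : ∀ ω, g (fun j => Z j ω, Z i ω) = fun j => Z j ω := by
    intro ω; funext j
    by_cases h : j ∈ T
    · simp [g, h]
    · obtain rfl : j = i := by simpa [T] using h
      simp [g, h]
  have hup : ∀ w, IsUpperSet (Prod.mk w ⁻¹' (g ⁻¹' E)) := by
    intro w z z' hzz' hz
    refine hEmono _ _ (by simpa [g, T] using hzz') (fun j hj => by simp [g, T, hj]) hz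
  simpa only [Set.mem_preimage, hgZ] using
    hind'.measure_inter_lt_le (measurable_pi_lambda (fun ω (j : T) => Z j ω) fun j => hZ j)
      (hZ i) (hg hE) hup c

end Harris

lemma ProbabilityTheory.IndepFun.measure_eq_eq_zero [IsProbabilityMeasure P] {X Y : Ω → ℝ}
    (hX : Measurable X) (hY : Measurable Y) (hind : IndepFun X Y P)
    [NullSingletonClass (P.map Y)] :
    P {ω | X ω = Y ω} = 0 := by
  have hmap := (indepFun_iff_map_prod_eq_prod_map_map hX.aemeasurable hY.aemeasurable).1 hind
  have hdiag : MeasurableSet {p : ℝ × ℝ | p.1 = p.2} := measurableSet_diagonal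
  have := Measure.map_apply (μ := P) (hX.prodMk hY) hdiag
  rw [hmap, Measure.prod_apply hdiag] at this
  simpa [measure_singleton] using this.symm

lemma ProbabilityTheory.iIndepFun.ae_injective_add {ι : Type*} [Countable ι]
    [IsProbabilityMeasure P] {Z : ι → Ω → ℝ} (hZ : ∀ i, Measurable (Z i)) (hind : iIndepFun Z P)
    [∀ i, NullSingletonClass (P.map (Z i))] (θ : ι → ℝ) :
    ∀ᵐ ω ∂P, Injective fun i => θ i + Z i ω := by
  simp only [Injective, ae_all_iff]
  intro i j
  rcases eq_or_ne i j with rfl | hij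
  · exact Filter.Eventually.of_forall fun _ _ => rfl
  have hshift : IndepFun (fun ω => Z i ω + (θ i - θ j)) (Z j) P :=
    (hind.indepFun hij).comp (measurable_add_const _) measurable_id
  refine ae_iff.2 (measure_mono_null (fun ω hω => ?_)
    (hshift.measure_eq_eq_zero ((hZ i).add_const _) (hZ j)))
  have heq : θ i + Z i ω = θ j + Z j ω := by_contra fun h => hω fun h' => absurd h' h
  change Z i ω + (θ i - θ j) = Z j ω
  linarith

lemma ProbabilityTheory.iIndepFun.sum_measure_numAbove_lt_inter_lt_le {ι : Type*} [Fintype ι]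
    [IsProbabilityMeasure P] {Z : ι → Ω → ℝ} (hZ : ∀ i, Measurable (Z i)) (hind : iIndepFun Z P)
    [∀ i, NullSingletonClass (P.map (Z i))] (θ : ι → ℝ) (k : ℕ) {c : ℝ} {p : ℝ≥0∞}
    (hp : ∀ i, P {ω | Z i ω < c} ≤ p) :
    ∑ i, P ({ω | numAbove (fun j => θ j + Z j ω) i < k} ∩ {ω | Z i ω < c}) ≤ p * k := by
  classical
  set E : ι → Set (ι → ℝ) := fun i => {x | numAbove (fun j => θ j + x j) i < k}
  have hE : ∀ i, MeasurableSet (E i) := fun i =>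
    (measurable_numAbove i).comp (measurable_const.add measurable_id) measurableSet_Iio
  have hC : ∀ i, MeasurableSet {ω | (fun j => Z j ω) ∈ E i} := fun i =>
    measurable_pi_lambda _ hZ (hE i)
  have hEmono : ∀ i x y, x i ≤ y i → (∀ j ≠ i, x j = y j) → x ∈ E i → y ∈ E i :=
    fun i x y hi hne hx => (numAbove_le_of_apply_le (by simpa using hi)
      fun j hj => by simp [hne j hj]).trans_lt hx
  have hcount : ∀ᵐ ω ∂P, ∀ s : Finset ι, (∀ i ∈ s, (fun j => Z j ω) ∈ E i) → #s ≤ k :=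
    (hind.ae_injective_add hZ θ).mono fun ω hω _ => card_le_of_forall_numAbove_lt hω
  calc ∑ i, P ({ω | (fun j => Z j ω) ∈ E i} ∩ {ω | Z i ω < c})
      ≤ ∑ i, p * P {ω | (fun j => Z j ω) ∈ E i} := sum_le_sum fun i _ =>
        (hind.measure_inter_lt_le hZ i (hE i) (hEmono i) c).trans (by gcongr; exact hp i)
    _ = p * ∑ i, P {ω | (fun j => Z j ω) ∈ E i} := (mul_sum ..).symm
    _ ≤ p * k := by
        gcongr
        simpa using sum_measure_le_of_ae_card_le hC hcount

lemma measure_lt_le_ofReal [IsFiniteMeasure P] {X : Ω → ℝ} {x r : ℝ}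
    (h : (P {ω | X ω ≤ x}).toReal = r) : P {ω | X ω < x} ≤ ENNReal.ofReal r :=
  calc P {ω | X ω < x} ≤ P {ω | X ω ≤ x} := measure_mono fun ω (hω : X ω < x) => hω.le
    _ = ENNReal.ofReal r := by rw [← h, ENNReal.ofReal_toReal (measure_ne_top P _)]

lemma measure_gt_eq_ofReal [IsProbabilityMeasure P] {X : Ω → ℝ} (hX : Measurable X) {x r : ℝ}
    (h : (P {ω | X ω ≤ x}).toReal = r) : P {ω | x < X ω} = ENNReal.ofReal (1 - r) := by
  have hmeas : MeasurableSet {ω | X ω ≤ x} := measurableSet_le hX measurable_const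
  rw [show {ω | x < X ω} = {ω | X ω ≤ x}ᶜ by ext; simp, prob_compl_eq_one_sub hmeas,
    ← ENNReal.ofReal_toReal (measure_ne_top P _), h, ← ENNReal.ofReal_one,
    ENNReal.ofReal_sub _ (h ▸ ENNReal.toReal_nonneg)]

lemma nullSingletonClass_map_of_continuous [IsProbabilityMeasure P] {X : Ω → ℝ}
    (hX : Measurable X) {F : ℝ → ℝ} (hF : Continuous F)
    (h : ∀ x, (P {ω | X ω ≤ x}).toReal = F x) : NullSingletonClass (P.map X) :=
  have : IsProbabilityMeasure (P.map X) := Measure.isProbabilityMeasure_map hX.aemeasurable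
  nullSingletonClass_of_continuous_cdf _ <| by
    convert hF
    funext x
    rw [cdf_eq_real, map_measureReal_apply hX measurableSet_Iic]
    exact h x

lemma ofReal_one_sub_le_measure_of_compl_subset [IsProbabilityMeasure P] {A B : Set Ω}
    (hAB : Aᶜ ⊆ B) {a : ℝ} (ha : 0 ≤ a) (hA : P A ≤ ENNReal.ofReal a) :
    ENNReal.ofReal (1 - a) ≤ P B :=
  calc ENNReal.ofReal (1 - a) = 1 - ENNReal.ofReal a := by
        rw [ENNReal.ofReal_sub _ ha, ENNReal.ofReal_one]
    _ ≤ 1 - P A := tsub_le_tsub_left hA 1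
    _ ≤ P Aᶜ := tsub_le_iff_left.2 (measure_univ (μ := P) ▸ measure_univ_le_add_compl A)
    _ ≤ P B := measure_mono hAB

end

theorem stmt9_general {Ω : Type*} [MeasurableSpace Ω] (P : Measure Ω) [IsProbabilityMeasure P]
    (m k : ℕ)
    (Z : Fin m → Ω → ℝ) (hZmeas : ∀ i, Measurable (Z i))
    (hindep : iIndepFun Z P)
    (F : ℝ → ℝ) (hFc : Continuous F)
    (hcdf : ∀ i x, (P {ω | Z i ω ≤ x}).toReal = F x)
    (θ : Fin m → ℝ) (α δ : ℝ) (hα : α ∈ Set.Ioo (0:ℝ) 1) (hδ : δ ∈ Set.Ioo (0:ℝ) 1)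
    (cl cu : ℝ) (hcl : F cl = 1 - δ * α / m) (hcu : F (-cu) = (1 - δ) * α / k)
    (S : Ω → Finset (Fin m))
    (hScard : ∀ ω, (S ω).card = k)
    (hSsel : ∀ ω, ∀ i ∈ S ω, ∀ j ∉ S ω, θ j + Z j ω ≤ θ i + Z i ω) :
    P {ω | ∀ i ∈ S ω, θ i ∈ Set.Icc (θ i + Z i ω - cl) (θ i + Z i ω + cu)}
      ≥ ENNReal.ofReal (1 - α) := by
  have (i : Fin m) : NullSingletonClass (P.map (Z i)) :=
    nullSingletonClass_map_of_continuous (hZmeas i) hFc (hcdf i)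
  have hδα : 0 ≤ δ * α := mul_nonneg hδ.1.le hα.1.le
  have hδα' : 0 ≤ (1 - δ) * α := mul_nonneg (sub_nonneg.2 hδ.2.le) hα.1.le
  let U i := {ω | cl < Z i ω}
  let L i := {ω | numAbove (fun j => θ j + Z j ω) i < k} ∩ {ω | Z i ω < -cu}
  have hcover : ((⋃ i, U i) ∪ ⋃ i, L i)ᶜ
      ⊆ {ω | ∀ i ∈ S ω, θ i ∈ Icc (θ i + Z i ω - cl) (θ i + Z i ω + cu)} := by
    intro ω hω i hi
    simp only [U, L, compl_union, mem_inter_iff, mem_compl_iff, mem_iUnion, mem_ofPred_eq,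
      not_exists, not_and, not_lt] at hω
    have hZcl := hω.1 i
    have hZcu := hω.2 i (hScard ω ▸ numAbove_lt_card_of_mem (hSsel ω) hi)
    constructor <;> linarith
  have hU : ∑ i, P (U i) ≤ ENNReal.ofReal (δ * α) := by
    simp_rw [U, measure_gt_eq_ofReal (hZmeas _) (hcdf _ cl), hcl, sub_sub_cancel, sum_const,
      card_univ, Fintype.card_fin, nsmul_eq_mul, mul_comm (m : ℝ≥0∞)]
    exact ENNReal.ofReal_div_natCast_mul_le hδα m
  have hL : ∑ i, P (L i) ≤ ENNReal.ofReal ((1 - δ) * α) :=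
    (hindep.sum_measure_numAbove_lt_inter_lt_le hZmeas θ k fun i =>
      (measure_lt_le_ofReal (hcdf i _)).trans_eq (by rw [hcu])).trans
      (ENNReal.ofReal_div_natCast_mul_le hδα' k)
  refine ofReal_one_sub_le_measure_of_compl_subset hcover hα.1.le ?_
  calc P ((⋃ i, U i) ∪ ⋃ i, L i) ≤ ∑ i, P (U i) + ∑ i, P (L i) :=
      (measure_union_le _ _).trans
        (add_le_add (measure_iUnion_fintype_le _ _) (measure_iUnion_fintype_le _ _))
    _ ≤ ENNReal.ofReal (δ * α) + ENNReal.ofReal ((1 - δ) * α) := add_le_add hU hL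
    _ = ENNReal.ofReal α := by rw [← ENNReal.ofReal_add hδα hδα']; ring_nf

theorem stmt9 {Ω : Type*} [MeasurableSpace Ω] (P : Measure Ω) [IsProbabilityMeasure P]
    (m k : ℕ) (hk : 1 ≤ k) (hkm : k ≤ m)
    (Z : Fin m → Ω → ℝ) (hZmeas : ∀ i, Measurable (Z i))
    (hindep : iIndepFun Z P)
    (F : ℝ → ℝ) (hFc : Continuous F) (hFm : StrictMono F)
    (hcdf : ∀ i x, (P {ω | Z i ω ≤ x}).toReal = F x)
    (θ : Fin m → ℝ) (α δ : ℝ) (hα : α ∈ Set.Ioo (0:ℝ) 1) (hδ : δ ∈ Set.Ioo (0:ℝ) 1)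
    (cl cu : ℝ) (hcl : F cl = 1 - δ * α / m) (hcu : F (-cu) = (1 - δ) * α / k)
    (S : Ω → Finset (Fin m))
    (hScard : ∀ ω, (S ω).card = k)
    (hSsel : ∀ ω, ∀ i ∈ S ω, ∀ j ∉ S ω, θ j + Z j ω ≤ θ i + Z i ω) :
    P {ω | ∀ i ∈ S ω, θ i ∈ Set.Icc (θ i + Z i ω - cl) (θ i + Z i ω + cu)}
      ≥ ENNReal.ofReal (1 - α) :=
  stmt9_general P m k Z hZmeas hindep F hFc hcdf θ α δ hα hδ cl cu hcl hcu S hScard hSsel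
end

section
/- Let Y = (Y_1, Y_2) be a standard bivariate normal vector centered at μ = (μ_1, μ_2) with identity covariance, and define B_{μ,c} = B^1 ∪ B^2 where B^i = {y : |μ_i - y_i| ≤ c and |y_i| > |y_j|, j ≠ i}. Then for a = max(|μ_1|, |μ_2|) and every c > 0, P_μ(Y ∈ B_{μ,c}) ≥ P_{(a,0)}(Y ∈ B_{(a,0),c}). -/
open MeasureTheory ProbabilityTheory

/-- The acceptance region for the "larger absolute value of two" selection rule. -/
def accB (μ : ℝ × ℝ) (c : ℝ) : Set (ℝ × ℝ) :=
  {y | (|μ.1 - y.1| ≤ c ∧ |y.2| < |y.1|) ∨ (|μ.2 - y.2| ≤ c ∧ |y.1| < |y.2|)}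

/-!
Writing `Z₁, Z₂` for independent standard normals and splitting `B_{μ,c}` by the selected
coordinate, `P_μ(Y ∈ B_{μ,c}) = Q(μ₁, μ₂) + Q(μ₂, μ₁)` with
`Q(m₁, m₂) = P(|Z₁| ≤ c, |Z₂ + m₂| < |Z₁ + m₁|) = ∫_{-c}^{c} φ(z) P(|Z + m₂| < |z + m₁|) dz`,
and `Q` depends only on `|m₁|, |m₂|`. It therefore suffices that `b ↦ Q(a, b) + Q(b, a)` is
nondecreasing on `[0, a]`. Differentiating under the integral sign and using
`φ(z) φ(z + 2s) = e^{-s²} e^{-(z+s)²} / (2π)`, the derivative is an explicit combination of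
integrals of `e^{-t²}`, weighted by `e^{-u²}` and `e^{-v²}` with `u = (a - b)/2`, `v = (a + b)/2`.
Its sign comes down to `e^{-u²} ∫_{l₂}^{m₂} e^{-t²} dt ≤ e^{-v²} ∫_{l₁}^{m₁} e^{-t²} dt` for
suitably nested endpoints, which follows from the substitution `t = √(y² + v² - u²)`.
-/

open Real Set intervalIntegral

lemma integral_zero_neg_of_even {f : ℝ → ℝ} (hf : ∀ t, f (-t) = f t) (x : ℝ) :
    ∫ t in (0 : ℝ)..-x, f t = -∫ t in (0 : ℝ)..x, f t := by
  rw [← integral_symm]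
  simpa only [hf, neg_neg, neg_zero] using (integral_comp_neg (a := x) (b := 0) f).symm

@[fun_prop]
lemma measurable_real_sign : Measurable Real.sign := by
  unfold Real.sign
  exact Measurable.ite measurableSet_Iio measurable_const
    (Measurable.ite measurableSet_Ioi measurable_const measurable_const)

lemma intervalIntegrable_sign_add_mul {h : ℝ → ℝ} (hh : Continuous h) (s p q : ℝ) :
    IntervalIntegrable (fun z => Real.sign (z + s) * h z) volume p q :=
  (hh.intervalIntegrable p q).mono_fun
    (by fun_prop : Measurable fun z => Real.sign (z + s) * h z).aestronglyMeasurable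
    (Filter.Eventually.of_forall fun z => by
      simp only [norm_mul]
      exact mul_le_of_le_one_left (norm_nonneg _) (by
        rcases Real.sign_apply_eq (z + s) with h | h | h <;> simp [h]))

lemma integral_sign_add_mul {h : ℝ → ℝ} (hh : Continuous h) {c s : ℝ} (hc : 0 ≤ c)
    (hs : 0 ≤ s) :
    ∫ z in -c..c, Real.sign (z + s) * h z
      = (∫ z in -c..c, h z) - 2 * ∫ z in -c..-min s c, h z := by
  have hm : -c ≤ -min s c := neg_le_neg (min_le_right s c)
  have hm' : -min s c ≤ c := by linarith [le_min hs hc]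
  have hneg : ∫ z in -c..-min s c, Real.sign (z + s) * h z = -∫ z in -c..-min s c, h z := by
    rw [← intervalIntegral.integral_neg]
    refine integral_congr_ae ?_
    have hne : ∀ᵐ z ∂volume, z ≠ -s := by simp [ae_iff, measure_singleton]
    filter_upwards [hne] with z hz hzI
    rw [uIoc_of_le hm] at hzI
    have : z + s < 0 := by
      rcases min_choice s c with h | h <;> rw [h] at hzI
      · exact lt_of_le_of_ne (by linarith [hzI.2]) (fun h => hz (by linarith))
      · linarith [hzI.1, hzI.2]
    rw [Real.sign_of_neg this, neg_one_mul]
  have hpos : ∫ z in -min s c..c, Real.sign (z + s) * h z = ∫ z in -min s c..c, h z := by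
    refine integral_congr_ae (Filter.Eventually.of_forall fun z hzI => ?_)
    rw [uIoc_of_le hm'] at hzI
    rw [Real.sign_of_pos (by linarith [hzI.1, min_le_left s c]), one_mul]
  rw [← integral_add_adjacent_intervals (intervalIntegrable_sign_add_mul hh s _ (-min s c))
      (intervalIntegrable_sign_add_mul hh s _ _), hneg, hpos,
    ← integral_add_adjacent_intervals (a := -c) (b := -min s c) (c := c)
      (hh.intervalIntegrable _ _) (hh.intervalIntegrable _ _)]
  ring

noncomputable def expNegSqPrimitive (x : ℝ) : ℝ := ∫ t in (0 : ℝ)..x, exp (-t ^ 2)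

lemma continuous_exp_neg_sq : Continuous fun t : ℝ => exp (-t ^ 2) := by fun_prop

lemma expNegSqPrimitive_sub (p q : ℝ) :
    expNegSqPrimitive q - expNegSqPrimitive p = ∫ t in p..q, exp (-t ^ 2) :=
  integral_interval_sub_left (continuous_exp_neg_sq.intervalIntegrable _ _)
    (continuous_exp_neg_sq.intervalIntegrable _ _)

lemma expNegSqPrimitive_neg (x : ℝ) : expNegSqPrimitive (-x) = -expNegSqPrimitive x :=
  integral_zero_neg_of_even (fun t => by rw [neg_sq]) x

lemma monotone_expNegSqPrimitive : Monotone expNegSqPrimitive := fun p q hpq => by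
  rw [← sub_nonneg, expNegSqPrimitive_sub]
  exact integral_nonneg hpq fun t _ => (exp_pos _).le

lemma integral_exp_neg_sq_sqrt_le {α β k : ℝ} (hα : 0 ≤ α) (hαβ : α ≤ β) (hk : 0 ≤ k) :
    ∫ t in √(α ^ 2 + k)..√(β ^ 2 + k), exp (-t ^ 2) ≤ exp (-k) * ∫ t in α..β, exp (-t ^ 2) := by
  rcases hk.eq_or_lt with rfl | hk
  · simp [sqrt_sq hα, sqrt_sq (hα.trans hαβ)]
  have hpos : ∀ y, 0 < √(y ^ 2 + k) := fun y => sqrt_pos.2 (by positivity)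
  have hderiv : ∀ y, HasDerivAt (fun y => √(y ^ 2 + k)) (y / √(y ^ 2 + k)) y := fun y => by
    convert ((hasDerivAt_pow 2 y).add_const k).sqrt (by positivity) using 1
    field_simp
    ring
  have hjac_cont : Continuous fun y => y / √(y ^ 2 + k) :=
    continuous_id.div (by fun_prop) fun y => (hpos y).ne'
  rw [← integral_comp_mul_deriv (fun y _ => hderiv y) hjac_cont.continuousOn
      continuous_exp_neg_sq, ← intervalIntegral.integral_const_mul]
  refine integral_mono_on hαβ ?_ ?_ fun y hy => ?_
  · exact ((continuous_exp_neg_sq.comp (by fun_prop)).mul hjac_cont).intervalIntegrable _ _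
  · exact (continuous_const.mul continuous_exp_neg_sq).intervalIntegrable _ _
  have hy : 0 ≤ y := hα.trans hy.1
  have hjac : y / √(y ^ 2 + k) ≤ 1 := by
    rw [div_le_one (hpos y)]
    exact le_sqrt_of_sq_le (by linarith)
  calc _ ≤ exp (-(y ^ 2 + k)) * 1 := by
        rw [Function.comp_apply, sq_sqrt (by positivity)]
        gcongr
    _ = exp (-k) * exp (-y ^ 2) := by rw [mul_one, ← exp_add]; ring_nf

lemma exp_mul_expNegSqPrimitive_sub_le {u v l₁ m₁ l₂ m₂ : ℝ} (huv : u ^ 2 ≤ v ^ 2)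
    (hl₁ : 0 ≤ l₁) (hlm₁ : l₁ ≤ m₁) (hl₂ : 0 ≤ l₂)
    (hl : l₁ ^ 2 + v ^ 2 ≤ l₂ ^ 2 + u ^ 2) (hm : m₂ ^ 2 + u ^ 2 ≤ m₁ ^ 2 + v ^ 2) :
    exp (-u ^ 2) * (expNegSqPrimitive m₂ - expNegSqPrimitive l₂)
      ≤ exp (-v ^ 2) * (expNegSqPrimitive m₁ - expNegSqPrimitive l₁) := by
  have hE₁ : 0 ≤ expNegSqPrimitive m₁ - expNegSqPrimitive l₁ :=
    sub_nonneg.2 (monotone_expNegSqPrimitive hlm₁)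
  rcases le_or_gt m₂ l₂ with hml₂ | hlm₂
  · have hE₂ : expNegSqPrimitive m₂ - expNegSqPrimitive l₂ ≤ 0 :=
      sub_nonpos.2 (monotone_expNegSqPrimitive hml₂)
    exact (mul_nonpos_of_nonneg_of_nonpos (exp_pos _).le hE₂).trans
      (mul_nonneg (exp_pos _).le hE₁)
  -- substitute `t = √(y ^ 2 + k)`, which maps `[α, β]` onto `[l₂, m₂]`
  set k := v ^ 2 - u ^ 2
  set α := √(l₂ ^ 2 - k)
  set β := √(m₂ ^ 2 - k)
  have hα : α ^ 2 = l₂ ^ 2 - k := sq_sqrt (by nlinarith)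
  have hβ : β ^ 2 = m₂ ^ 2 - k := sq_sqrt (by nlinarith)
  have hl₂α : √(α ^ 2 + k) = l₂ := by rw [hα, sub_add_cancel, sqrt_sq hl₂]
  have hm₂β : √(β ^ 2 + k) = m₂ := by rw [hβ, sub_add_cancel, sqrt_sq (by linarith)]
  have hαβ : α ≤ β := sqrt_le_sqrt (by nlinarith)
  have hl₁α : l₁ ≤ α := le_sqrt_of_sq_le (by linarith)
  have hβm₁ : β ≤ m₁ := sqrt_le_iff.2 ⟨by linarith, by linarith⟩
  calc exp (-u ^ 2) * (expNegSqPrimitive m₂ - expNegSqPrimitive l₂)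
      = exp (-u ^ 2) * ∫ t in √(α ^ 2 + k)..√(β ^ 2 + k), exp (-t ^ 2) := by
        rw [hl₂α, hm₂β, expNegSqPrimitive_sub]
    _ ≤ exp (-u ^ 2) * (exp (-k) * ∫ t in α..β, exp (-t ^ 2)) := by
        gcongr
        exact integral_exp_neg_sq_sqrt_le (sqrt_nonneg _) hαβ (by linarith)
    _ = exp (-v ^ 2) * (expNegSqPrimitive β - expNegSqPrimitive α) := by
        rw [expNegSqPrimitive_sub, ← mul_assoc, ← exp_add]
        congr 2
        ring
    _ ≤ exp (-v ^ 2) * (expNegSqPrimitive m₁ - expNegSqPrimitive l₁) := by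
        gcongr <;> exact monotone_expNegSqPrimitive ‹_›

local notation "φ" => gaussianPDFReal 0 1

lemma gaussianPDFReal_zero_one (x : ℝ) : φ x = (√(2 * π))⁻¹ * exp (-x ^ 2 / 2) := by
  simp [gaussianPDFReal_def]

@[fun_prop]
lemma continuous_gaussianPDFReal_zero_one : Continuous φ := by
  simp only [gaussianPDFReal_def]
  fun_prop

lemma gaussianPDFReal_zero_one_neg (x : ℝ) : φ (-x) = φ x := by
  simp only [gaussianPDFReal_zero_one, neg_sq]

lemma gaussianPDFReal_zero_one_le_one (x : ℝ) : φ x ≤ 1 := by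
  rw [gaussianPDFReal_zero_one]
  have h2π : 1 ≤ √(2 * π) := one_le_sqrt.2 (by linarith [pi_gt_three])
  calc (√(2 * π))⁻¹ * exp (-x ^ 2 / 2) ≤ 1 * 1 := by
        gcongr
        · exact inv_le_one_of_one_le₀ h2π
        · exact exp_le_one_iff.2 (by nlinarith [sq_nonneg x])
    _ = 1 := one_mul 1

lemma gaussianPDFReal_zero_one_mul_add (z s : ℝ) :
    φ z * φ (z + 2 * s) = (2 * π)⁻¹ * exp (-s ^ 2) * exp (-(z + s) ^ 2) := by
  simp only [gaussianPDFReal_zero_one]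
  have h : (√(2 * π))⁻¹ * (√(2 * π))⁻¹ = (2 * π)⁻¹ := by
    rw [← mul_inv, mul_self_sqrt (by positivity)]
  have he : exp (-z ^ 2 / 2) * exp (-(z + 2 * s) ^ 2 / 2)
      = exp (-s ^ 2) * exp (-(z + s) ^ 2) := by
    rw [← exp_add, ← exp_add]
    ring_nf
  rw [← h]
  linear_combination (√(2 * π))⁻¹ * (√(2 * π))⁻¹ * he

lemma integral_gaussianPDFReal_zero_one_mul_add (p q s : ℝ) :
    ∫ z in p..q, φ z * φ (z + 2 * s)
      = (2 * π)⁻¹ * exp (-s ^ 2) * (expNegSqPrimitive (q + s) - expNegSqPrimitive (p + s)) := by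
  simp only [gaussianPDFReal_zero_one_mul_add, intervalIntegral.integral_const_mul,
    expNegSqPrimitive_sub, integral_comp_add_right fun z => exp (-z ^ 2)]

noncomputable def stdNormalPrimitive (x : ℝ) : ℝ := ∫ t in (0 : ℝ)..x, φ t

lemma stdNormalPrimitive_sub (p q : ℝ) :
    stdNormalPrimitive q - stdNormalPrimitive p = ∫ t in p..q, φ t :=
  integral_interval_sub_left (continuous_gaussianPDFReal_zero_one.intervalIntegrable _ _)
    (continuous_gaussianPDFReal_zero_one.intervalIntegrable _ _)

lemma stdNormalPrimitive_neg (x : ℝ) : stdNormalPrimitive (-x) = -stdNormalPrimitive x :=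
  integral_zero_neg_of_even gaussianPDFReal_zero_one_neg x

lemma hasDerivAt_stdNormalPrimitive (x : ℝ) : HasDerivAt stdNormalPrimitive (φ x) x :=
  integral_hasDerivAt_right (continuous_gaussianPDFReal_zero_one.intervalIntegrable _ _)
    (continuous_gaussianPDFReal_zero_one.stronglyMeasurableAtFilter _ _)
    continuous_gaussianPDFReal_zero_one.continuousAt

@[fun_prop]
lemma continuous_stdNormalPrimitive : Continuous stdNormalPrimitive :=
  continuous_iff_continuousAt.2 fun x => (hasDerivAt_stdNormalPrimitive x).continuousAt

lemma abs_stdNormalPrimitive_sub_le (x y : ℝ) :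
    |stdNormalPrimitive x - stdNormalPrimitive y| ≤ |x - y| := by
  rw [stdNormalPrimitive_sub, ← Real.norm_eq_abs, ← Real.norm_eq_abs, ← one_mul ‖x - y‖]
  exact norm_integral_le_of_norm_le_const fun t _ => by
    rw [Real.norm_of_nonneg (gaussianPDFReal_nonneg _ _ _)]
    exact gaussianPDFReal_zero_one_le_one t

/-- `probAbsAddLt m w` is the probability that `|Z + m| < w` for a standard normal `Z`. -/
noncomputable def probAbsAddLt (m w : ℝ) : ℝ :=
  stdNormalPrimitive (w - m) - stdNormalPrimitive (-w - m)

@[fun_prop]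
lemma continuous_probAbsAddLt (m : ℝ) : Continuous (probAbsAddLt m) := by
  unfold probAbsAddLt
  fun_prop

lemma probAbsAddLt_nonneg (m : ℝ) {w : ℝ} (hw : 0 ≤ w) : 0 ≤ probAbsAddLt m w := by
  rw [probAbsAddLt, stdNormalPrimitive_sub]
  exact intervalIntegral.integral_nonneg (by linarith) fun t _ => gaussianPDFReal_nonneg _ _ _

lemma probAbsAddLt_neg (m w : ℝ) : probAbsAddLt (-m) w = probAbsAddLt m w := by
  rw [probAbsAddLt, probAbsAddLt, sub_neg_eq_add, sub_neg_eq_add,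
    show w + m = -(-w - m) by ring, show -w + m = -(w - m) by ring,
    stdNormalPrimitive_neg, stdNormalPrimitive_neg]
  ring

lemma abs_probAbsAddLt_sub_le (m m' w w' : ℝ) :
    |probAbsAddLt m w - probAbsAddLt m' w'| ≤ 2 * (|m - m'| + |w - w'|) := by
  have h₁ := abs_stdNormalPrimitive_sub_le (w - m) (w' - m')
  have h₂ := abs_stdNormalPrimitive_sub_le (-w - m) (-w' - m')
  have h₃ : |w - m - (w' - m')| ≤ |m - m'| + |w - w'| := by
    rw [show w - m - (w' - m') = (w - w') - (m - m') by ring, add_comm]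
    exact abs_sub _ _
  have h₄ : |-w - m - (-w' - m')| ≤ |m - m'| + |w - w'| := by
    rw [show -w - m - (-w' - m') = -(m - m') - (w - w') by ring, ← abs_neg (m - m')]
    exact abs_sub _ _
  unfold probAbsAddLt
  calc _ = |(stdNormalPrimitive (w - m) - stdNormalPrimitive (w' - m'))
          - (stdNormalPrimitive (-w - m) - stdNormalPrimitive (-w' - m'))| := by ring_nf
    _ ≤ _ := (abs_sub _ _).trans (by linarith)

lemma hasDerivAt_probAbsAddLt_left (m w : ℝ) :
    HasDerivAt (fun m => probAbsAddLt m w) (φ (w + m) - φ (w - m)) m := by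
  have h₁ := (hasDerivAt_stdNormalPrimitive (w - m)).comp m ((hasDerivAt_id m).const_sub w)
  have h₂ := (hasDerivAt_stdNormalPrimitive (-w - m)).comp m ((hasDerivAt_id m).const_sub (-w))
  refine (h₁.sub h₂).congr_deriv ?_
  rw [show -w - m = -(w + m) by ring, gaussianPDFReal_zero_one_neg]
  ring

lemma hasDerivAt_probAbsAddLt_right (m w : ℝ) :
    HasDerivAt (fun w => probAbsAddLt m w) (φ (w - m) + φ (w + m)) w := by
  have h₁ := (hasDerivAt_stdNormalPrimitive (w - m)).comp w ((hasDerivAt_id w).sub_const m)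
  have h₂ := (hasDerivAt_stdNormalPrimitive (-w - m)).comp w ((hasDerivAt_id w).neg.sub_const m)
  refine (h₁.sub h₂).congr_deriv ?_
  rw [show -w - m = -(w + m) by ring, gaussianPDFReal_zero_one_neg]
  ring

/-- `probCoverFirst c m₁ m₂` is the probability that `|Z₁| ≤ c` and `|Z₂ + m₂| < |Z₁ + m₁|` for
independent standard normals `Z₁, Z₂`. -/
noncomputable def probCoverFirst (c m₁ m₂ : ℝ) : ℝ :=
  ∫ z in -c..c, φ z * probAbsAddLt m₂ |z + m₁|

noncomputable def probAccept (c m₁ m₂ : ℝ) : ℝ :=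
  probCoverFirst c m₁ m₂ + probCoverFirst c m₂ m₁

lemma probCoverFirst_nonneg {c : ℝ} (hc : 0 ≤ c) (m₁ m₂ : ℝ) : 0 ≤ probCoverFirst c m₁ m₂ :=
  intervalIntegral.integral_nonneg (by linarith) fun z _ =>
    mul_nonneg (gaussianPDFReal_nonneg _ _ _) (probAbsAddLt_nonneg _ (abs_nonneg _))

lemma gaussianReal_Ioo {p q : ℝ} (hpq : p ≤ q) :
    gaussianReal 0 1 (Ioo p q)
      = ENNReal.ofReal (stdNormalPrimitive q - stdNormalPrimitive p) := by
  rw [gaussianReal_apply_eq_integral 0 one_ne_zero, stdNormalPrimitive_sub,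
    integral_of_le hpq, integral_Ioc_eq_integral_Ioo]

lemma gaussianReal_abs_add_lt (m : ℝ) {w : ℝ} (hw : 0 ≤ w) :
    gaussianReal 0 1 {y | |y + m| < w} = ENNReal.ofReal (probAbsAddLt m w) := by
  have hIoo : {y : ℝ | |y + m| < w} = Ioo (-w - m) (w - m) := by
    ext y
    simp only [mem_ofPred_eq, mem_Ioo, abs_lt]
    constructor <;> rintro ⟨h₁, h₂⟩ <;> constructor <;> linarith
  rw [hIoo, gaussianReal_Ioo (by linarith), probAbsAddLt]

lemma setLIntegral_gaussianReal_Icc {f : ℝ → ℝ} (hf : Continuous f) (hf₀ : ∀ x, 0 ≤ f x)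
    {a b : ℝ} (hab : a ≤ b) :
    ∫⁻ x in Icc a b, ENNReal.ofReal (f x) ∂gaussianReal 0 1
      = ENNReal.ofReal (∫ x in a..b, φ x * f x) := by
  rw [gaussianReal_of_var_ne_zero 0 one_ne_zero, restrict_withDensity measurableSet_Icc,
    lintegral_withDensity_eq_lintegral_mul _ (measurable_gaussianPDF 0 1)
      hf.measurable.ennreal_ofReal]
  simp only [Pi.mul_apply, gaussianPDF, ← ENNReal.ofReal_mul (gaussianPDFReal_nonneg _ _ _)]
  rw [← ofReal_integral_eq_lintegral_ofReal (f := fun x => φ x * f x)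
      ((continuous_gaussianPDFReal_zero_one.mul hf).integrableOn_Icc)
      (Filter.Eventually.of_forall fun x => mul_nonneg (gaussianPDFReal_nonneg _ _ _) (hf₀ x)),
    integral_of_le hab, integral_Icc_eq_integral_Ioc]

lemma measurableSet_coverFirst (c m₁ m₂ : ℝ) :
    MeasurableSet {z : ℝ × ℝ | |z.1| ≤ c ∧ |z.2 + m₂| < |z.1 + m₁|} := by
  measurability

lemma prod_gaussianReal_coverFirst {c : ℝ} (hc : 0 ≤ c) (m₁ m₂ : ℝ) :
    (gaussianReal 0 1).prod (gaussianReal 0 1)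
        {z : ℝ × ℝ | |z.1| ≤ c ∧ |z.2 + m₂| < |z.1 + m₁|}
      = ENNReal.ofReal (probCoverFirst c m₁ m₂) := by
  have hslice : ∀ x, gaussianReal 0 1
        (Prod.mk x ⁻¹' {z : ℝ × ℝ | |z.1| ≤ c ∧ |z.2 + m₂| < |z.1 + m₁|})
      = (Icc (-c) c).indicator (fun x => ENNReal.ofReal (probAbsAddLt m₂ |x + m₁|)) x := by
    intro x
    by_cases hx : x ∈ Icc (-c) c
    · rw [indicator_of_mem hx, ← gaussianReal_abs_add_lt _ (abs_nonneg _)]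
      congr 1
      ext y
      simp [abs_le.2 hx]
    · rw [indicator_of_notMem hx, ← measure_empty (μ := gaussianReal 0 1)]
      congr 1
      ext y
      simp only [mem_preimage, mem_ofPred_eq, mem_empty_iff_false, iff_false, not_and]
      exact fun h => absurd (abs_le.1 h) hx
  rw [Measure.prod_apply (measurableSet_coverFirst c m₁ m₂), lintegral_congr hslice,
    lintegral_indicator measurableSet_Icc,
    setLIntegral_gaussianReal_Icc (by fun_prop) (fun x => probAbsAddLt_nonneg _ (abs_nonneg _))
      (by linarith), probCoverFirst]

lemma map_add_const_accB {c : ℝ} (hc : 0 ≤ c) (ν : ℝ × ℝ) :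
    Measure.map (fun z => z + ν) ((gaussianReal 0 1).prod (gaussianReal 0 1)) (accB ν c)
      = ENNReal.ofReal (probAccept c ν.1 ν.2) := by
  set S := fun m₁ m₂ : ℝ => {z : ℝ × ℝ | |z.1| ≤ c ∧ |z.2 + m₂| < |z.1 + m₁|}
  have hpre : (fun z => z + ν) ⁻¹' accB ν c = S ν.1 ν.2 ∪ Prod.swap ⁻¹' S ν.2 ν.1 := by
    ext z
    simp only [accB, S, mem_preimage, mem_union, mem_ofPred_eq, Prod.fst_add, Prod.snd_add,
      Prod.fst_swap, Prod.snd_swap, sub_add_cancel_right, abs_neg]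
  have hdisj : Disjoint (S ν.1 ν.2) (Prod.swap ⁻¹' S ν.2 ν.1) :=
    disjoint_left.2 fun z h₁ h₂ => h₁.2.not_gt h₂.2
  have hswap : ((gaussianReal 0 1).prod (gaussianReal 0 1)) (Prod.swap ⁻¹' S ν.2 ν.1)
      = (gaussianReal 0 1).prod (gaussianReal 0 1) (S ν.2 ν.1) := by
    rw [← Measure.map_apply measurable_swap (measurableSet_coverFirst c _ _), Measure.prod_swap]
  rw [Measure.map_apply (measurable_add_const ν) (by unfold accB; measurability), hpre,
    measure_union hdisj (measurable_swap (measurableSet_coverFirst c _ _)), hswap,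
    prod_gaussianReal_coverFirst hc, prod_gaussianReal_coverFirst hc, probAccept,
    ENNReal.ofReal_add (probCoverFirst_nonneg hc _ _) (probCoverFirst_nonneg hc _ _)]

lemma probCoverFirst_neg_left (c m₁ m₂ : ℝ) :
    probCoverFirst c (-m₁) m₂ = probCoverFirst c m₁ m₂ := by
  calc ∫ z in -c..c, φ z * probAbsAddLt m₂ |z + -m₁|
      = ∫ z in -c..c, (fun z => φ z * probAbsAddLt m₂ |z + m₁|) (-z) := by
        refine integral_congr fun z _ => ?_
        simp only [gaussianPDFReal_zero_one_neg, ← abs_neg (-z + m₁), neg_add, neg_neg]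
    _ = probCoverFirst c m₁ m₂ := by
        rw [integral_comp_neg (fun z => φ z * probAbsAddLt m₂ |z + m₁|), neg_neg, probCoverFirst]

lemma probCoverFirst_neg_right (c m₁ m₂ : ℝ) :
    probCoverFirst c m₁ (-m₂) = probCoverFirst c m₁ m₂ := by
  simp only [probCoverFirst, probAbsAddLt_neg]

lemma probCoverFirst_abs (c m₁ m₂ : ℝ) : probCoverFirst c |m₁| |m₂| = probCoverFirst c m₁ m₂ := by
  rcases abs_choice m₁ with h₁ | h₁ <;> rcases abs_choice m₂ with h₂ | h₂ <;>
    simp only [h₁, h₂, probCoverFirst_neg_left, probCoverFirst_neg_right]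

lemma probAccept_abs (c m₁ m₂ : ℝ) : probAccept c |m₁| |m₂| = probAccept c m₁ m₂ := by
  simp only [probAccept, probCoverFirst_abs]

lemma probAccept_comm (c m₁ m₂ : ℝ) : probAccept c m₂ m₁ = probAccept c m₁ m₂ :=
  add_comm _ _

lemma probAccept_eq_integral (c a b : ℝ) :
    probAccept c a b = ∫ z in -c..c, φ z * (probAbsAddLt b |z + a| + probAbsAddLt a |z + b|) := by
  rw [probAccept, probCoverFirst, probCoverFirst, ← intervalIntegral.integral_add]
  · simp only [mul_add]
  all_goals exact Continuous.intervalIntegrable (by fun_prop) _ _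
lemma gaussianPDFReal_zero_one_abs_add_sub (y s : ℝ) :
    φ (|y| + s) - φ (|y| - s) = Real.sign y * (φ (y + s) - φ (y - s)) := by
  rcases lt_trichotomy y 0 with hy | rfl | hy
  · rw [abs_of_neg hy, Real.sign_of_neg hy, ← gaussianPDFReal_zero_one_neg (-y + s),
      ← gaussianPDFReal_zero_one_neg (-y - s)]
    ring_nf
  · rw [abs_zero, zero_add, zero_sub, gaussianPDFReal_zero_one_neg, Real.sign_zero]
    ring
  · rw [abs_of_pos hy, Real.sign_of_pos hy, one_mul]

lemma hasDerivAt_probAbsAddLt_abs_add (m z x : ℝ) (h : z + x ≠ 0) :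
    HasDerivAt (fun x => probAbsAddLt m |z + x|)
      (Real.sign (z + x) * (φ (z + x - m) + φ (z + x + m))) x := by
  have hshift := (hasDerivAt_id x).const_add z
  rcases h.lt_or_gt with hneg | hpos
  · refine ((hasDerivAt_probAbsAddLt_right m _).comp x
      ((hasDerivAt_abs_neg hneg).comp x hshift)).congr_deriv ?_
    simp only [Function.comp_apply, abs_of_neg hneg, Real.sign_of_neg hneg]
    rw [← gaussianPDFReal_zero_one_neg (-(z + x) - m),
      ← gaussianPDFReal_zero_one_neg (-(z + x) + m)]
    ring_nf
  · refine ((hasDerivAt_probAbsAddLt_right m _).comp x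
      ((hasDerivAt_abs_pos hpos).comp x hshift)).congr_deriv ?_
    simp only [Function.comp_apply, abs_of_pos hpos, Real.sign_of_pos hpos]
    ring

noncomputable def probAcceptDeriv (c a b : ℝ) : ℝ :=
  ∫ z in -c..c, φ z * (Real.sign (z + a) * (φ (z + a + b) - φ (z + a - b))
    + Real.sign (z + b) * (φ (z + b - a) + φ (z + b + a)))

lemma hasDerivAt_probAccept (c a b : ℝ) :
    HasDerivAt (probAccept c a) (probAcceptDeriv c a b) b := by
  simp only [funext (probAccept_eq_integral c a)]
  refine (hasDerivAt_integral_of_dominated_loc_of_lip (bound := fun _ => 4) Filter.univ_mem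
    (Filter.Eventually.of_forall fun x => (Continuous.aestronglyMeasurable (by fun_prop)))
    (Continuous.intervalIntegrable (by fun_prop) _ _) ?_ ?_ intervalIntegrable_const ?_).2
  · exact Measurable.aestronglyMeasurable (by fun_prop)
  · refine Filter.Eventually.of_forall fun z _ => LipschitzWith.lipschitzOnWith ?_
    refine LipschitzWith.of_dist_le_mul fun x y => ?_
    have h₁ := abs_probAbsAddLt_sub_le x y |z + a| |z + a|
    have h₂ := abs_probAbsAddLt_sub_le a a |z + x| |z + y|
    have h₃ : |(|z + x| - |z + y|)| ≤ |x - y| := by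
      simpa using abs_abs_sub_abs_le_abs_sub (z + x) (z + y)
    simp only [Real.dist_eq, Real.coe_nnabs, sub_self, abs_zero, zero_add, add_zero] at h₁ h₂ ⊢
    rw [← mul_sub, abs_mul, abs_of_nonneg (gaussianPDFReal_nonneg _ _ _),
      abs_of_pos (four_pos (α := ℝ))]
    calc φ z * |probAbsAddLt x |z + a| + probAbsAddLt a |z + x|
          - (probAbsAddLt y |z + a| + probAbsAddLt a |z + y|)|
        ≤ 1 * (2 * |x - y| + 2 * |x - y|) := by
          gcongr
          · exact gaussianPDFReal_zero_one_le_one z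
          · calc _ = |(probAbsAddLt x |z + a| - probAbsAddLt y |z + a|)
                  + (probAbsAddLt a |z + x| - probAbsAddLt a |z + y|)| := by ring_nf
              _ ≤ _ := (abs_add_le _ _).trans (by linarith)
      _ = 4 * |x - y| := by ring
  · have hne : ∀ᵐ z ∂volume, z ≠ -b := by simp [ae_iff, measure_singleton]
    filter_upwards [hne] with z hz _
    have h₁ := hasDerivAt_probAbsAddLt_left b |z + a|
    have h₂ := hasDerivAt_probAbsAddLt_abs_add a z b (fun h => hz (by linarith))
    refine ((h₁.add h₂).const_mul (φ z)).congr_deriv ?_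
    rw [gaussianPDFReal_zero_one_abs_add_sub]

lemma probAcceptDeriv_eq {a b c : ℝ} (ha : 0 ≤ a) (hb : 0 ≤ b) (hc : 0 ≤ c) :
    probAcceptDeriv c a b = 2 * (2 * π)⁻¹ *
      (exp (-((a + b) / 2) ^ 2) * (expNegSqPrimitive (c + (a + b) / 2)
          + expNegSqPrimitive ((a + b) / 2 - c) - expNegSqPrimitive ((a + b) / 2 - min a c)
          - expNegSqPrimitive ((a + b) / 2 - min b c))
        - exp (-((a - b) / 2) ^ 2) * (expNegSqPrimitive (c + (a - b) / 2)
          + expNegSqPrimitive ((a - b) / 2 - c) - expNegSqPrimitive ((a - b) / 2 - min a c)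
          - expNegSqPrimitive ((a - b) / 2 + min b c))) := by
  set u := (a - b) / 2
  set v := (a + b) / 2
  have hA : ∀ p q, ∫ z in p..q, φ z * (φ (z + a + b) - φ (z + a - b))
      = (2 * π)⁻¹ * exp (-v ^ 2) * (expNegSqPrimitive (q + v) - expNegSqPrimitive (p + v))
        - (2 * π)⁻¹ * exp (-u ^ 2) * (expNegSqPrimitive (q + u) - expNegSqPrimitive (p + u)) := by
    intro p q
    simp only [mul_sub, show ∀ z, z + a + b = z + 2 * v from fun z => by ring,
      show ∀ z, z + a - b = z + 2 * u from fun z => by ring]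
    rw [integral_sub (Continuous.intervalIntegrable (by fun_prop) _ _)
      (Continuous.intervalIntegrable (by fun_prop) _ _),
      integral_gaussianPDFReal_zero_one_mul_add, integral_gaussianPDFReal_zero_one_mul_add]
    ring
  have hB : ∀ p q, ∫ z in p..q, φ z * (φ (z + b - a) + φ (z + b + a))
      = (2 * π)⁻¹ * exp (-u ^ 2) * (expNegSqPrimitive (q - u) - expNegSqPrimitive (p - u))
        + (2 * π)⁻¹ * exp (-v ^ 2) * (expNegSqPrimitive (q + v) - expNegSqPrimitive (p + v)) := by
    intro p q
    simp only [mul_add, show ∀ z, z + b - a = z + 2 * -u from fun z => by ring,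
      show ∀ z, z + b + a = z + 2 * v from fun z => by ring]
    rw [integral_add (Continuous.intervalIntegrable (by fun_prop) _ _)
      (Continuous.intervalIntegrable (by fun_prop) _ _),
      integral_gaussianPDFReal_zero_one_mul_add, integral_gaussianPDFReal_zero_one_mul_add,
      neg_sq, ← sub_eq_add_neg, ← sub_eq_add_neg]
  have hsplit : probAcceptDeriv c a b
      = (∫ z in -c..c, Real.sign (z + a) * (φ z * (φ (z + a + b) - φ (z + a - b))))
        + ∫ z in -c..c, Real.sign (z + b) * (φ z * (φ (z + b - a) + φ (z + b + a))) := by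
    rw [probAcceptDeriv, ← integral_add (intervalIntegrable_sign_add_mul (by fun_prop) _ _ _)
      (intervalIntegrable_sign_add_mul (by fun_prop) _ _ _)]
    congr 1
    ext z
    ring
  have o₁ := expNegSqPrimitive_neg (u - c)
  have o₂ := expNegSqPrimitive_neg (c + u)
  have o₃ := expNegSqPrimitive_neg (u + min b c)
  rw [hsplit, integral_sign_add_mul (by fun_prop) hc ha,
    integral_sign_add_mul (by fun_prop) hc hb, hA, hA, hB, hB]
  ring_nf at o₁ o₂ o₃ ⊢
  rw [o₁, o₂, o₃]
  ring

lemma probAcceptDeriv_nonneg {a b c : ℝ} (hb : 0 ≤ b) (hba : b ≤ a) (hc : 0 < c) :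
    0 ≤ probAcceptDeriv c a b := by
  rw [probAcceptDeriv_eq (hb.trans hba) hb hc.le]
  refine mul_nonneg (by positivity) (sub_nonneg.2 ?_)
  generalize hu : (a - b) / 2 = u
  generalize hv : (a + b) / 2 = v
  have hu₀ : 0 ≤ u := by linarith
  have huv : u ^ 2 ≤ v ^ 2 := pow_le_pow_left₀ hu₀ (by linarith) 2
  rcases le_or_gt c b with hcb | hbc
  · rw [min_eq_right (hcb.trans hba), min_eq_right hcb, add_comm u c]
    have hmono := monotone_expNegSqPrimitive (show v - c ≤ c + v by linarith)
    linear_combination mul_le_mul_of_nonneg_left hmono (exp_pos (-v ^ 2)).le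
  rcases le_or_gt c a with hca | hac
  · rw [min_eq_right hca, min_eq_left hbc.le, show u + b = v by linarith,
      show v - b = u by linarith]
    have key := exp_mul_expNegSqPrimitive_sub_le (l₁ := u) (m₁ := c + v) (l₂ := v)
      (m₂ := c + u) huv hu₀ (by linarith) (by linarith) (by linarith) (by nlinarith)
    linear_combination key
  · rw [min_eq_left hac.le, min_eq_left hbc.le, show u + b = v by linarith,
      show v - b = u by linarith, show u - a = -v by linarith, show v - a = -u by linarith,
      show u - c = -(c - u) by ring, show v - c = -(c - v) by ring]
    simp only [expNegSqPrimitive_neg]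
    have key := exp_mul_expNegSqPrimitive_sub_le (l₁ := c - v) (m₁ := c + v) (l₂ := c - u)
      (m₂ := c + u) huv (by linarith) (by linarith) (by linarith)
      (by nlinarith [mul_nonneg (show 0 ≤ v - u by linarith) (show 0 ≤ c - a by linarith)])
      (by nlinarith)
    linear_combination key

lemma monotoneOn_probAccept {a c : ℝ} (hc : 0 < c) : MonotoneOn (probAccept c a) (Icc 0 a) :=
  monotoneOn_of_hasDerivWithinAt_nonneg (convex_Icc 0 a)
    (fun x _ => (hasDerivAt_probAccept c a x).continuousAt.continuousWithinAt)
    (fun x _ => (hasDerivAt_probAccept c a x).hasDerivWithinAt)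
    (fun x hx => by
      rw [interior_Icc] at hx
      exact probAcceptDeriv_nonneg hx.1.le hx.2.le hc)

lemma probAccept_max_min (c x y : ℝ) :
    probAccept c (max x y) (min x y) = probAccept c x y := by
  rcases le_total x y with h | h
  · rw [max_eq_right h, min_eq_left h, probAccept_comm]
  · rw [max_eq_left h, min_eq_right h]

theorem stmt13 (μ : ℝ × ℝ) (c : ℝ) (hc : 0 < c) :
    Measure.map (fun z : ℝ × ℝ => z + (max |μ.1| |μ.2|, 0))
        ((gaussianReal 0 1).prod (gaussianReal 0 1)) (accB (max |μ.1| |μ.2|, 0) c)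
      ≤ Measure.map (fun z : ℝ × ℝ => z + μ)
        ((gaussianReal 0 1).prod (gaussianReal 0 1)) (accB μ c) := by
  rw [map_add_const_accB hc.le, map_add_const_accB hc.le]
  refine ENNReal.ofReal_le_ofReal ?_
  have hmin : 0 ≤ min |μ.1| |μ.2| := le_min (abs_nonneg _) (abs_nonneg _)
  calc probAccept c (max |μ.1| |μ.2|) 0
      ≤ probAccept c (max |μ.1| |μ.2|) (min |μ.1| |μ.2|) :=
        monotoneOn_probAccept hc ⟨le_rfl, hmin.trans min_le_max⟩ ⟨hmin, min_le_max⟩ hmin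
    _ = probAccept c μ.1 μ.2 := by rw [probAccept_max_min, probAccept_abs]
end

section
/- Let Y ~ N((μ_1, 0), I_2) with μ_1 ≥ 0, and define B_{μ,c} as the union over i of {y : |μ_i - y_i| ≤ c, |y_i| > |y_{3-i}|} with μ = (μ_1, 0). Then P(Y ∈ B_{(μ_1,0),c}) equals the sum over i ∈ {1,2} of ∫_{-c}^{c} φ(t)[Φ(t + μ_i - μ_{i'}) - Φ(-t - μ_i - μ_{i'})]·(-1)^{1{t + μ_i < 0}} dt with i' = 3 - i, where φ and Φ are the standard normal density and CDF. -/
open MeasureTheory ProbabilityTheory intervalIntegral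

/-- The standard normal density. -/
noncomputable def stdPhi (t : ℝ) : ℝ := (Real.sqrt (2 * Real.pi))⁻¹ * Real.exp (-t ^ 2 / 2)

/-- The standard normal CDF. -/
noncomputable def stdPhiCDF (x : ℝ) : ℝ := ∫ t in Set.Iic x, stdPhi t

lemma stdPhi_eq : stdPhi = gaussianPDFReal 0 1 := by
  funext x; simp [stdPhi, gaussianPDFReal]
lemma stdPhi_nonneg (t : ℝ) : 0 ≤ stdPhi t := by
  rw [stdPhi_eq]; exact gaussianPDFReal_nonneg 0 1 t
lemma integrable_stdPhi : Integrable stdPhi := by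
  rw [stdPhi_eq]; exact integrable_gaussianPDFReal 0 1
lemma stdPhiCDF_sub (u v : ℝ) : stdPhiCDF v - stdPhiCDF u = ∫ x in u..v, stdPhi x :=
  integral_Iic_sub_Iic integrable_stdPhi.integrableOn integrable_stdPhi.integrableOn
lemma stdPhiCDF_mono : Monotone stdPhiCDF := by
  intro u v h
  have := stdPhiCDF_sub u v
  have h2 : 0 ≤ ∫ x in u..v, stdPhi x :=
    intervalIntegral.integral_nonneg h (fun t _ => stdPhi_nonneg t)
  linarith
lemma measurable_stdPhiCDF : Measurable stdPhiCDF := stdPhiCDF_mono.measurable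
noncomputable def gg (m a : ℝ) : ℝ := stdPhiCDF (|a| - m) - stdPhiCDF (-|a| - m)
lemma gg_nonneg (m a : ℝ) : 0 ≤ gg m a :=
  sub_nonneg.2 (stdPhiCDF_mono (by have := abs_nonneg a; linarith))
lemma gg_le_one (m a : ℝ) : gg m a ≤ 1 := by
  have h1 : gg m a = ∫ x in (-|a| - m)..(|a| - m), stdPhi x := stdPhiCDF_sub _ _
  have hle : -|a| - m ≤ |a| - m := by have := abs_nonneg a; linarith
  rw [h1, intervalIntegral.integral_of_le hle]
  have h2 : ∫ x, stdPhi x = 1 := by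
    rw [stdPhi_eq]; exact integral_gaussianPDFReal_eq_one 0 one_ne_zero
  calc ∫ x in Set.Ioc (-|a| - m) (|a| - m), stdPhi x ≤ ∫ x, stdPhi x :=
        setIntegral_le_integral integrable_stdPhi (ae_of_all _ stdPhi_nonneg)
    _ = 1 := h2
lemma gg_measurable (m : ℝ) : Measurable (gg m) :=
  ((measurable_stdPhiCDF.comp ((measurable_abs).sub measurable_const)).sub
    (measurable_stdPhiCDF.comp ((measurable_abs.neg).sub measurable_const)))
lemma gauss_Ioo (m u v : ℝ) (h : u ≤ v) :
    gaussianReal m 1 (Set.Ioo u v) = ENNReal.ofReal (stdPhiCDF (v - m) - stdPhiCDF (u - m)) := by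
  rw [gaussianReal_apply_eq_integral _ one_ne_zero]
  congr 1
  rw [stdPhiCDF_sub, intervalIntegral.integral_of_le (by linarith : u - m ≤ v - m)]
  have htrans : ∀ x : ℝ, gaussianPDFReal m 1 x = stdPhi (x - m) := by
    intro x; rw [stdPhi_eq, gaussianPDFReal_sub, zero_add]
  calc ∫ x in Set.Ioo u v, gaussianPDFReal m 1 x
      = ∫ x in Set.Ioc u v, gaussianPDFReal m 1 x := (integral_Ioc_eq_integral_Ioo).symm
    _ = ∫ x in u..v, stdPhi (x - m) := by
        rw [intervalIntegral.integral_of_le h]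
        exact setIntegral_congr_fun measurableSet_Ioc (fun x _ => htrans x)
    _ = ∫ x in (u - m)..(v - m), stdPhi x := intervalIntegral.integral_comp_sub_right _ m
    _ = ∫ x in Set.Ioc (u - m) (v - m), stdPhi x :=
        intervalIntegral.integral_of_le (by linarith)
lemma gauss_abs (m a : ℝ) :
    gaussianReal m 1 {y | |y| < |a|} = ENNReal.ofReal (gg m a) := by
  have hset : {y : ℝ | |y| < |a|} = Set.Ioo (-|a|) |a| := by ext y; simp [abs_lt]
  rw [hset, gauss_Ioo m _ _ (by have := abs_nonneg a; linarith)]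
  rfl
lemma sign_flip (m a : ℝ) :
    (stdPhiCDF (a - m) - stdPhiCDF (-a - m)) * (if a < 0 then -1 else 1) = gg m a := by
  rcases lt_or_ge a 0 with h | h
  · simp only [if_pos h, gg, abs_of_neg h]; ring
  · simp only [if_neg (not_lt.2 h), gg, abs_of_nonneg h]; ring

/-- key set-integral lemma: lintegral over Icc of ofReal(g) against gaussian = ofReal of integral. -/
lemma lint_gauss (m : ℝ) (s : Set ℝ) (hs : MeasurableSet s) (g : ℝ → ℝ)
    (hg : Measurable g) (hg0 : ∀ x, 0 ≤ g x) (hg1 : ∀ x, g x ≤ 1) :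
    ∫⁻ x in s, ENNReal.ofReal (g x) ∂(gaussianReal m 1)
      = ENNReal.ofReal (∫ x in s, gaussianPDFReal m 1 x * g x) := by
  rw [gaussianReal_of_var_ne_zero _ one_ne_zero, restrict_withDensity hs,
    lintegral_withDensity_eq_lintegral_mul _ (measurable_gaussianPDF m 1)
      (hg.ennreal_ofReal)]
  have hint : Integrable (fun x => gaussianPDFReal m 1 x * g x) (volume.restrict s) := by
    refine Integrable.mono' (integrable_gaussianPDFReal m 1).restrict
      ((measurable_gaussianPDFReal m 1).mul hg).aestronglyMeasurable
      (ae_of_all _ fun x => ?_)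
    rw [Real.norm_eq_abs, abs_of_nonneg (mul_nonneg (gaussianPDFReal_nonneg m 1 x) (hg0 x))]
    exact mul_le_of_le_one_right (gaussianPDFReal_nonneg m 1 x) (hg1 x)
  rw [ofReal_integral_eq_lintegral_ofReal hint
    (ae_of_all _ fun x => mul_nonneg (gaussianPDFReal_nonneg m 1 x) (hg0 x))]
  refine lintegral_congr fun x => ?_
  simp only [Pi.mul_apply, gaussianPDF]
  rw [ENNReal.ofReal_mul (gaussianPDFReal_nonneg m 1 x)]

theorem stmt14 (μ₁ : ℝ) (hμ₁ : 0 ≤ μ₁) (c : ℝ) (hc : 0 < c) :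
    (Measure.map (fun z : ℝ × ℝ => z + (μ₁, 0))
        ((gaussianReal 0 1).prod (gaussianReal 0 1)) (accB (μ₁, 0) c)).toReal
      = (∫ t in (-c)..c, stdPhi t * (stdPhiCDF (t + μ₁ - 0) - stdPhiCDF (-t - μ₁ - 0)) *
            (if t + μ₁ < 0 then -1 else 1))
        + ∫ t in (-c)..c, stdPhi t * (stdPhiCDF (t + 0 - μ₁) - stdPhiCDF (-t - 0 - μ₁)) *
            (if t + 0 < 0 then -1 else 1) := by
  set P := gaussianReal 0 1 with hP
  set ν := gaussianReal μ₁ 1 with hν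
  -- Step A: the mapped measure is ν.prod P
  have hmap : Measure.map (fun z : ℝ × ℝ => z + (μ₁, 0)) (P.prod P) = ν.prod P := by
    have hfun : (fun z : ℝ × ℝ => z + (μ₁, 0))
        = Prod.map (fun x : ℝ => x + μ₁) (fun y : ℝ => y + 0) := by
      funext z; simp [Prod.map, Prod.ext_iff]
    rw [hfun, ← Measure.map_prod_map _ _ (measurable_add_const μ₁) (measurable_add_const 0)]
    have h1 : Measure.map (fun x : ℝ => x + μ₁) P = ν := by
      rw [hP, hν, gaussianReal_map_add_const, zero_add]
    have h2 : Measure.map (fun y : ℝ => y + 0) P = P := by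
      rw [hP, gaussianReal_map_add_const, add_zero]
    rw [h1, h2]
  -- Step B: split accB
  set B₁ : Set (ℝ × ℝ) := {y | |μ₁ - y.1| ≤ c ∧ |y.2| < |y.1|} with hB₁
  set B₂ : Set (ℝ × ℝ) := {y | |y.2| ≤ c ∧ |y.1| < |y.2|} with hB₂
  have hBsplit : accB (μ₁, 0) c = B₁ ∪ B₂ := by
    ext y; simp [accB, hB₁, hB₂]
  have hmB₁ : MeasurableSet B₁ :=
    (measurableSet_le ((continuous_const.sub continuous_fst).abs.measurable)
      measurable_const).inter
      (measurableSet_lt continuous_snd.abs.measurable continuous_fst.abs.measurable)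
  have hmB₂ : MeasurableSet B₂ :=
    (measurableSet_le continuous_snd.abs.measurable measurable_const).inter
      (measurableSet_lt continuous_fst.abs.measurable continuous_snd.abs.measurable)
  have hdisj : Disjoint B₁ B₂ := by
    rw [Set.disjoint_left]
    rintro y ⟨_, h1⟩ ⟨_, h2⟩
    exact lt_asymm h1 h2
  -- Step C: compute (ν.prod P) B₁
  have hC : (ν.prod P) B₁
      = ENNReal.ofReal (∫ x in Set.Icc (μ₁ - c) (μ₁ + c), gaussianPDFReal μ₁ 1 x * gg 0 x) := by
    rw [Measure.prod_apply hmB₁]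
    have hsec : ∀ x : ℝ, P (Prod.mk x ⁻¹' B₁)
        = Set.indicator (Set.Icc (μ₁ - c) (μ₁ + c)) (fun x => ENNReal.ofReal (gg 0 x)) x := by
      intro x
      have hpre : Prod.mk x ⁻¹' B₁ = {y : ℝ | |μ₁ - x| ≤ c ∧ |y| < |x|} := rfl
      by_cases hx : |μ₁ - x| ≤ c
      · have hxIcc : x ∈ Set.Icc (μ₁ - c) (μ₁ + c) := by
          rw [abs_le] at hx; constructor <;> linarith [hx.1, hx.2]
        rw [Set.indicator_of_mem hxIcc, hpre]
        have : {y : ℝ | |μ₁ - x| ≤ c ∧ |y| < |x|} = {y : ℝ | |y| < |x|} := by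
          ext y; simp [hx]
        rw [this, hP]
        exact gauss_abs 0 x
      · have hxIcc : x ∉ Set.Icc (μ₁ - c) (μ₁ + c) := by
          rw [abs_le] at hx; push_neg at hx
          intro hmem
          rcases hmem with ⟨h1, h2⟩
          rcases lt_or_ge (μ₁ - x) (-c) with h | h
          · linarith
          · linarith [hx h]
        rw [Set.indicator_of_notMem hxIcc, hpre]
        have : {y : ℝ | |μ₁ - x| ≤ c ∧ |y| < |x|} = ∅ := by
          ext y; simp [hx]
        rw [this, measure_empty]
    simp_rw [hsec]
    rw [lintegral_indicator measurableSet_Icc _, hν]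
    exact lint_gauss μ₁ _ measurableSet_Icc (gg 0) (gg_measurable 0) (gg_nonneg 0) (gg_le_one 0)
  -- Step D: compute (ν.prod P) B₂
  have hD : (ν.prod P) B₂
      = ENNReal.ofReal (∫ y in Set.Icc (-c) c, gaussianPDFReal 0 1 y * gg μ₁ y) := by
    rw [Measure.prod_apply_symm hmB₂]
    have hsec : ∀ y : ℝ, ν ((fun x => (x, y)) ⁻¹' B₂)
        = Set.indicator (Set.Icc (-c) c) (fun y => ENNReal.ofReal (gg μ₁ y)) y := by
      intro y
      have hpre : (fun x => (x, y)) ⁻¹' B₂ = {x : ℝ | |y| ≤ c ∧ |x| < |y|} := rfl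
      by_cases hy : |y| ≤ c
      · have hyIcc : y ∈ Set.Icc (-c) c := by rw [Set.mem_Icc, ← abs_le]; exact hy
        rw [Set.indicator_of_mem hyIcc, hpre]
        have : {x : ℝ | |y| ≤ c ∧ |x| < |y|} = {x : ℝ | |x| < |y|} := by
          ext x; simp [hy]
        rw [this, hν]
        exact gauss_abs μ₁ y
      · have hyIcc : y ∉ Set.Icc (-c) c := by rw [Set.mem_Icc, ← abs_le]; exact hy
        rw [Set.indicator_of_notMem hyIcc, hpre]
        have : {x : ℝ | |y| ≤ c ∧ |x| < |y|} = ∅ := by ext x; simp [hy]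
        rw [this, measure_empty]
    simp_rw [hsec]
    rw [lintegral_indicator measurableSet_Icc _, hP]
    exact lint_gauss 0 _ measurableSet_Icc (gg μ₁) (gg_measurable μ₁) (gg_nonneg μ₁)
      (gg_le_one μ₁)
  -- assemble LHS
  have hA0 : 0 ≤ ∫ x in Set.Icc (μ₁ - c) (μ₁ + c), gaussianPDFReal μ₁ 1 x * gg 0 x :=
    setIntegral_nonneg measurableSet_Icc fun x _ =>
      mul_nonneg (gaussianPDFReal_nonneg _ _ _) (gg_nonneg _ _)
  have hB0 : 0 ≤ ∫ y in Set.Icc (-c) c, gaussianPDFReal 0 1 y * gg μ₁ y :=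
    setIntegral_nonneg measurableSet_Icc fun y _ =>
      mul_nonneg (gaussianPDFReal_nonneg _ _ _) (gg_nonneg _ _)
  have hLHS : (Measure.map (fun z : ℝ × ℝ => z + (μ₁, 0)) (P.prod P) (accB (μ₁, 0) c)).toReal
      = (∫ x in Set.Icc (μ₁ - c) (μ₁ + c), gaussianPDFReal μ₁ 1 x * gg 0 x)
        + ∫ y in Set.Icc (-c) c, gaussianPDFReal 0 1 y * gg μ₁ y := by
    rw [hmap, hBsplit, measure_union hdisj hmB₂, hC, hD,
      ENNReal.toReal_add ENNReal.ofReal_ne_top ENNReal.ofReal_ne_top,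
      ENNReal.toReal_ofReal hA0, ENNReal.toReal_ofReal hB0]
  rw [hLHS]
  -- RHS first integral
  have hR1 : (∫ t in (-c)..c, stdPhi t * (stdPhiCDF (t + μ₁ - 0) - stdPhiCDF (-t - μ₁ - 0)) *
        (if t + μ₁ < 0 then -1 else 1))
      = ∫ x in Set.Icc (μ₁ - c) (μ₁ + c), gaussianPDFReal μ₁ 1 x * gg 0 x := by
    have hpt : ∀ t : ℝ, stdPhi t * (stdPhiCDF (t + μ₁ - 0) - stdPhiCDF (-t - μ₁ - 0)) *
        (if t + μ₁ < 0 then -1 else 1) = stdPhi t * gg 0 (t + μ₁) := by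
      intro t
      rw [mul_assoc]
      congr 1
      rw [show -t - μ₁ - 0 = -(t + μ₁) - 0 by ring]
      exact sign_flip 0 (t + μ₁)
    rw [intervalIntegral.integral_congr fun t _ => hpt t]
    have hcv := intervalIntegral.integral_comp_add_right
      (fun x => stdPhi (x - μ₁) * gg 0 x) (a := -c) (b := c) μ₁
    simp only [add_sub_cancel_right] at hcv
    rw [hcv]
    have htrans : ∀ x : ℝ, stdPhi (x - μ₁) = gaussianPDFReal μ₁ 1 x := by
      intro x; rw [stdPhi_eq, gaussianPDFReal_sub, zero_add]
    rw [show -c + μ₁ = μ₁ - c by ring, show c + μ₁ = μ₁ + c by ring,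
      intervalIntegral.integral_of_le (by linarith : μ₁ - c ≤ μ₁ + c),
      ← integral_Icc_eq_integral_Ioc]
    exact setIntegral_congr_fun measurableSet_Icc fun x _ => by rw [htrans x]
  -- RHS second integral
  have hR2 : (∫ t in (-c)..c, stdPhi t * (stdPhiCDF (t + 0 - μ₁) - stdPhiCDF (-t - 0 - μ₁)) *
        (if t + 0 < 0 then -1 else 1))
      = ∫ y in Set.Icc (-c) c, gaussianPDFReal 0 1 y * gg μ₁ y := by
    have hpt : ∀ t : ℝ, stdPhi t * (stdPhiCDF (t + 0 - μ₁) - stdPhiCDF (-t - 0 - μ₁)) *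
        (if t + 0 < 0 then -1 else 1) = stdPhi t * gg μ₁ t := by
      intro t
      rw [mul_assoc, show t + 0 - μ₁ = t - μ₁ by ring, show -t - 0 - μ₁ = -t - μ₁ by ring,
        show t + 0 = t by ring]
      congr 1
      exact sign_flip μ₁ t
    rw [intervalIntegral.integral_congr fun t _ => hpt t,
      intervalIntegral.integral_of_le (by linarith : -c ≤ c),
      ← integral_Icc_eq_integral_Ioc]
    refine setIntegral_congr_fun measurableSet_Icc fun t _ => ?_
    rw [← stdPhi_eq]
  rw [hR1, hR2]
end

section
/- Under the hypotheses of the largest-k-of-m proposition (independent Y_i = θ_i + Z_i, P(Z_i > c̲_i) ≤ λ̲, P(Z_i < -c̄_i) ≤ λ̄, S the index set of the k largest), the probability that at least one selected interval's upper endpoint is below its parameter satisfies P(∃ i ∈ S(Y): Y_i + c̄_i < θ_i) ≤ k·λ̄ — a Bonferroni bound with multiplicity k rather than m. -/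
/-!
Let `D` be a fixed set of `k` indices with the largest values of `θ i - cu i`. If some selected
index `i'` has `Y i' < θ i' - cu i'` and `i' ∉ D`, then, as `S` and `D` both have `k` elements,
some `i ∈ D` is not selected, so `Y i ≤ Y i' < θ i' - cu i' ≤ θ i - cu i`. Hence the event is
contained in the union of the `k` events `{Z i < -cu i}`, `i ∈ D`, and the union bound applies.
-/

open MeasureTheory ProbabilityTheory

def IsTopFinset {ι α : Type*} [LE α] (f : ι → α) (s : Finset ι) : Prop :=
  ∀ i ∈ s, ∀ j ∉ s, f j ≤ f i

section IsTopFinset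

variable {ι α : Type*} [LinearOrder α]

theorem exists_isTopFinset_card_eq [Fintype ι] [DecidableEq ι] (f : ι → α) {k : ℕ}
    (hk : k ≤ Fintype.card ι) : ∃ s : Finset ι, s.card = k ∧ IsTopFinset f s := by
  induction k with
  | zero => exact ⟨∅, rfl, by simp [IsTopFinset]⟩
  | succ n ih =>
    obtain ⟨s, hcard, htop⟩ := ih (Nat.le_of_succ_le hk)
    have hne : sᶜ.Nonempty := by
      rw [← Finset.card_pos, Finset.card_compl, hcard]
      omega
    obtain ⟨a, has, hmax⟩ := Finset.exists_max_image sᶜ f hne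
    rw [Finset.mem_compl] at has
    refine ⟨insert a s, by rw [Finset.card_insert_of_notMem has, hcard], ?_⟩
    intro i hi j hj
    rw [Finset.mem_insert, not_or] at hj
    rcases Finset.mem_insert.mp hi with rfl | his
    · exact hmax j (Finset.mem_compl.mpr hj.2)
    · exact htop i his j hj.2

theorem IsTopFinset.exists_mem_lt {g y : ι → α} {s t : Finset ι} (hs : IsTopFinset g s)
    (ht : IsTopFinset y t) (hcard : t.card ≤ s.card) {i' : ι} (hi't : i' ∈ t)
    (hi' : y i' < g i') : ∃ i ∈ s, y i < g i := by
  by_cases hi's : i' ∈ s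
  · exact ⟨i', hi's, hi'⟩
  have hst : ¬ s ⊆ t := fun h =>
    hi's (Finset.eq_of_subset_of_card_le h hcard ▸ hi't)
  obtain ⟨i, his, hit⟩ := Finset.not_subset.mp hst
  exact ⟨i, his, (ht i' hi't i hit).trans_lt (hi'.trans_le (hs i his i' hi's))⟩

end IsTopFinset

theorem stmt19_general {Ω : Type*} [MeasurableSpace Ω] (P : Measure Ω)
    (m k : ℕ) (hkm : k ≤ m)
    (Z : Fin m → Ω → ℝ)
    (θ : Fin m → ℝ) (cu : Fin m → ℝ)
    (lamU : ℝ)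
    (htailU : ∀ i, P {ω | Z i ω < -cu i} ≤ ENNReal.ofReal lamU)
    (S : Ω → Finset (Fin m))
    (hScard : ∀ ω, (S ω).card = k)
    (hSsel : ∀ ω, ∀ i ∈ S ω, ∀ j ∉ S ω, θ j + Z j ω ≤ θ i + Z i ω) :
    P {ω | ∃ i ∈ S ω, θ i + Z i ω + cu i < θ i} ≤ k * ENNReal.ofReal lamU := by
  obtain ⟨D, hDcard, hDtop⟩ :=
    exists_isTopFinset_card_eq (fun i => θ i - cu i) (hkm.trans_eq (Fintype.card_fin m).symm)
  have hsub : {ω | ∃ i ∈ S ω, θ i + Z i ω + cu i < θ i} ⊆ ⋃ i ∈ D, {ω | Z i ω < -cu i} := by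
    rintro ω ⟨i', hi'S, hi'⟩
    obtain ⟨i, hiD, hi⟩ := hDtop.exists_mem_lt (y := fun i => θ i + Z i ω) (hSsel ω)
      (by rw [hScard, hDcard]) hi'S (by linarith)
    exact Set.mem_biUnion hiD (show Z i ω < -cu i by linarith)
  calc P {ω | ∃ i ∈ S ω, θ i + Z i ω + cu i < θ i}
      ≤ P (⋃ i ∈ D, {ω | Z i ω < -cu i}) := measure_mono hsub
    _ ≤ ∑ i ∈ D, P {ω | Z i ω < -cu i} := measure_biUnion_finset_le D _
    _ ≤ D.card • ENNReal.ofReal lamU := Finset.sum_le_card_nsmul D _ _ fun i _ => htailU i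
    _ = k * ENNReal.ofReal lamU := by rw [hDcard, nsmul_eq_mul]

theorem stmt19 {Ω : Type*} [MeasurableSpace Ω] (P : Measure Ω) [IsProbabilityMeasure P]
    (m k : ℕ) (hk : 1 ≤ k) (hkm : k ≤ m)
    (Z : Fin m → Ω → ℝ) (hZmeas : ∀ i, Measurable (Z i))
    (hindep : iIndepFun Z P)
    (θ : Fin m → ℝ) (cu : Fin m → ℝ) (hcu : ∀ i, 0 < cu i)
    (lamU : ℝ) (hlamU : lamU ∈ Set.Ioo (0:ℝ) 1)
    (htailU : ∀ i, P {ω | Z i ω < -cu i} ≤ ENNReal.ofReal lamU)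
    (S : Ω → Finset (Fin m))
    (hScard : ∀ ω, (S ω).card = k)
    (hSsel : ∀ ω, ∀ i ∈ S ω, ∀ j ∉ S ω, θ j + Z j ω ≤ θ i + Z i ω) :
    P {ω | ∃ i ∈ S ω, θ i + Z i ω + cu i < θ i} ≤ k * ENNReal.ofReal lamU :=
  stmt19_general P m k hkm Z θ cu lamU htailU S hScard hSsel
end
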